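/- arXiv:1702.02490 — 7 statements merged into one kernel-verified Lean document; each statement's English description precedes it below -/
import Mathlib

section
/- Let H be a nonempty, monotone, regular subset of L⁰₊. Then H° = (H ∩ C_b)°, i.e. a finite positive Borel measure μ satisfies ⟨f,μ⟩ ≤ 1 for all f ∈ H if and only if it satisfies ⟨f,μ⟩ ≤ 1 for all bounded continuous f ∈ H. -/
open MeasureTheory Filter ENNReal NNReal

section Defs

variable {Ω : Type*} [TopologicalSpace Ω] [MeasurableSpace Ω]

/-- The polar of a set `H` of `[0,∞]`-valued Borel functions: all finite positive Borel
measures `μ` with `⟨f,μ⟩ = ∫ f dμ ≤ 1` for every `f ∈ H`. -/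
def polar (H : Set (Ω → ℝ≥0∞)) : Set (Measure Ω) :=
  {μ | IsFiniteMeasure μ ∧ ∀ f ∈ H, ∫⁻ x, f x ∂μ ≤ 1}

/-- The bipolar of a set `H` of `[0,∞]`-valued Borel functions. -/
def bipolar (H : Set (Ω → ℝ≥0∞)) : Set (Ω → ℝ≥0∞) :=
  {f | Measurable f ∧ ∀ μ ∈ polar H, ∫⁻ x, f x ∂μ ≤ 1}

/-- `h` is (the coercion of) a bounded continuous real-valued function. -/
def IsCb (h : Ω → ℝ≥0∞) : Prop :=
  Continuous h ∧ ∃ C : ℝ≥0, ∀ x, h x ≤ C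

/-- `h` is (the coercion of) a bounded upper semicontinuous real-valued function. -/
def IsUb (h : Ω → ℝ≥0∞) : Prop :=
  UpperSemicontinuous h ∧ ∃ C : ℝ≥0, ∀ x, h x ≤ C

/-- `H` is monotone: any nonnegative Borel function dominated by an element of `H`
belongs to `H`. -/
def MonotoneSet (H : Set (Ω → ℝ≥0∞)) : Prop :=
  ∀ f : Ω → ℝ≥0∞, Measurable f → (∃ h ∈ H, ∀ x, f x ≤ h x) → f ∈ H

/-- `H` is regular: for every finite positive Borel measure `μ`, the supremum of `⟨h,μ⟩`
over `H ∩ U_b` equals the supremum over `H ∩ C_b`. -/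
def RegularSet (H : Set (Ω → ℝ≥0∞)) : Prop :=
  ∀ μ : Measure Ω, IsFiniteMeasure μ →
    sSup {x : ℝ≥0∞ | ∃ h ∈ H, IsUb h ∧ x = ∫⁻ ω, h ω ∂μ} =
      sSup {x : ℝ≥0∞ | ∃ h ∈ H, IsCb h ∧ x = ∫⁻ ω, h ω ∂μ}

/-- `H` is closed under `liminf`: the pointwise `liminf` of any sequence in `H` is in `H`. -/
def LiminfClosed (H : Set (Ω → ℝ≥0∞)) : Prop :=
  ∀ h : ℕ → Ω → ℝ≥0∞, (∀ n, h n ∈ H) →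
    (fun x => liminf (fun n => h n x) atTop) ∈ H

/-- `H` is convex. -/
def ConvexSet (H : Set (Ω → ℝ≥0∞)) : Prop :=
  ∀ f ∈ H, ∀ g ∈ H, ∀ t : ℝ≥0∞, t ≤ 1 →
    (fun x => t * f x + (1 - t) * g x) ∈ H

end Defs

/-! Finite Borel measures on a metric space are weakly regular, so by Vitali–Carathéodory
the integral of any `f ≥ 0` is approximated by integrals of bounded upper semicontinuous
`g ≤ f`. For `f ∈ H` these `g` lie in `H` by monotonicity, so regularity bounds their
integrals by the supremum over `H ∩ C_b`, which is at most `1` for `μ ∈ (H ∩ C_b)°`. -/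

theorem lintegral_le_of_forall_isUb_le {Ω : Type*} [TopologicalSpace Ω] [MeasurableSpace Ω]
    [BorelSpace Ω] {μ : Measure Ω} [μ.WeaklyRegular] [IsFiniteMeasure μ]
    {f : Ω → ℝ≥0∞} {c : ℝ≥0∞} (h : ∀ g, IsUb g → (∀ x, g x ≤ f x) → ∫⁻ x, g x ∂μ ≤ c) :
    ∫⁻ x, f x ∂μ ≤ c := by
  rw [lintegral_eq_nnreal]
  refine iSup₂_le fun φ hφf => ?_
  rw [← SimpleFunc.lintegral_eq_lintegral, SimpleFunc.coe_map]
  obtain ⟨C, hφC⟩ := φ.exists_forall_le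
  have hφ_ne_top : ∫⁻ x, (φ x : ℝ≥0∞) ∂μ ≠ ∞ :=
    (IsFiniteMeasure.lintegral_lt_top_of_bounded_to_ennreal μ
      ⟨C, fun x => ENNReal.coe_le_coe.2 (hφC x)⟩).ne
  refine le_of_forall_pos_le_add fun ε hε _ => ?_
  obtain ⟨g, hgφ, hg_usc, hφg⟩ :=
    exists_upperSemicontinuous_le_lintegral_le φ hφ_ne_top (ENNReal.coe_ne_zero.2 hε.ne')
  have hg : IsUb fun x => (g x : ℝ≥0∞) :=
    ⟨continuous_coe.comp_upperSemicontinuous hg_usc fun _ _ => ENNReal.coe_le_coe.2,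
      C, fun x => ENNReal.coe_le_coe.2 ((hgφ x).trans (hφC x))⟩
  calc ∫⁻ x, (φ x : ℝ≥0∞) ∂μ ≤ ∫⁻ x, (g x : ℝ≥0∞) ∂μ + ε := hφg
    _ ≤ c + ε := by
      gcongr
      exact h _ hg fun x => (ENNReal.coe_le_coe.2 (hgφ x)).trans (hφf x)

theorem RegularSet.lintegral_le_one_of_mem_polar {Ω : Type*} [TopologicalSpace Ω]
    [MeasurableSpace Ω] {H : Set (Ω → ℝ≥0∞)} (hreg : RegularSet H) {μ : Measure Ω}
    (hμ : μ ∈ polar {h ∈ H | IsCb h}) {g : Ω → ℝ≥0∞} (hgH : g ∈ H) (hg : IsUb g) :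
    ∫⁻ x, g x ∂μ ≤ 1 :=
  calc ∫⁻ x, g x ∂μ ≤ sSup {x | ∃ h ∈ H, IsUb h ∧ x = ∫⁻ ω, h ω ∂μ} := le_sSup ⟨g, hgH, hg, rfl⟩
    _ = sSup {x | ∃ h ∈ H, IsCb h ∧ x = ∫⁻ ω, h ω ∂μ} := hreg μ hμ.1
    _ ≤ 1 := sSup_le <| by
      rintro _ ⟨h, hhH, hh, rfl⟩
      exact hμ.2 h ⟨hhH, hh⟩

theorem polar_eq_polar_inter_Cb_general
    {Ω : Type*} [MetricSpace Ω]
    [MeasurableSpace Ω] [BorelSpace Ω]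
    (H : Set (Ω → ℝ≥0∞))
    (hmono : MonotoneSet H) (hreg : RegularSet H) :
    polar H = polar {h ∈ H | IsCb h} := by
  ext μ
  refine ⟨fun hμ => ⟨hμ.1, fun f hf => hμ.2 f hf.1⟩, fun hμ => ⟨hμ.1, fun f hf => ?_⟩⟩
  have := hμ.1
  refine lintegral_le_of_forall_isUb_le fun g hg hgf => ?_
  exact hreg.lintegral_le_one_of_mem_polar hμ (hmono g hg.1.measurable ⟨f, hf, hgf⟩) hg

/-- **Corollary 1.2** in Bartl–Kupper, "A pointwise bipolar theorem": under the
assumptions of the pointwise bipolar theorem, the polar of `H` coincides with the polar of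
`H ∩ C_b`: a finite positive Borel measure `μ` satisfies `⟨f,μ⟩ ≤ 1` for all `f ∈ H` if and
only if it satisfies `⟨f,μ⟩ ≤ 1` for all bounded continuous `f ∈ H`. -/
theorem polar_eq_polar_inter_Cb
    {Ω : Type*} [MetricSpace Ω] [SigmaCompactSpace Ω]
    [MeasurableSpace Ω] [BorelSpace Ω]
    (H : Set (Ω → ℝ≥0∞)) (hmeas : ∀ f ∈ H, Measurable f)
    (hne : H.Nonempty) (hmono : MonotoneSet H) (hreg : RegularSet H) :
    polar H = polar {h ∈ H | IsCb h} :=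
  polar_eq_polar_inter_Cb_general H hmono hreg
end

section
/- Suppose H ⊆ L⁰_{b-} is monotone and closed under liminf. Then H is nontrivial if and only if there exists a unique m ∈ ℝ such that H − m := {h − m : h ∈ H} is normalized. -/
open MeasureTheory Filter ENNReal NNReal

/-- Positive part of an extended real number, as an element of `[0,∞]`. -/
noncomputable def ERealPosPart (x : EReal) : ℝ≥0∞ :=
  if x = ⊤ then ⊤ else ENNReal.ofReal x.toReal

section Defs

variable {Ω : Type*} [TopologicalSpace Ω] [MeasurableSpace Ω]

/-- The pairing `⟨f,μ⟩ = ∫ f dμ` for an extended-real-valued function `f`; for `f` bounded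
from below and `μ` a finite measure this is the usual (extended-valued) integral. -/
noncomputable def ePair (f : Ω → EReal) (μ : Measure Ω) : EReal :=
  ((∫⁻ x, ERealPosPart (f x) ∂μ : ℝ≥0∞) : EReal) -
    ((∫⁻ x, ERealPosPart (-f x) ∂μ : ℝ≥0∞) : EReal)

/-- `L⁰_{b-}`: the set of Borel measurable functions `Ω → ℝ ∪ {+∞}` which are bounded from
below (modelled as `EReal`-valued functions bounded below by a real constant). -/
def L0b : Set (Ω → EReal) :=
  {f | Measurable f ∧ ∃ c : ℝ, ∀ x, (c : EReal) ≤ f x}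

/-- `H ⊆ L⁰_{b-}` is monotone: `f ∈ H` whenever `f ∈ L⁰_{b-}` satisfies `f ≤ h` for some
`h ∈ H`. -/
def MonotoneB (H : Set (Ω → EReal)) : Prop :=
  ∀ f ∈ L0b, (∃ h ∈ H, ∀ x, f x ≤ h x) → f ∈ H

/-- `H` is normalized: the constant function `0` belongs to `H` and no constant
function `ε > 0` belongs to `H`. -/
def NormalizedB (H : Set (Ω → EReal)) : Prop :=
  (fun _ => (0 : EReal)) ∈ H ∧ ∀ ε : ℝ, 0 < ε → (fun _ => (ε : EReal)) ∉ H

/-- `H` is tight: for every constant `m ∈ ℝ` with `m ∈ H`, every `n ∈ ℕ` and `ε > 0` there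
is a compact `K ⊆ Ω` with `m − ε + n·1_{Kᶜ} ∈ H`. -/
def TightB (H : Set (Ω → EReal)) : Prop :=
  ∀ m : ℝ, (fun _ => (m : EReal)) ∈ H → ∀ n : ℕ, ∀ ε : ℝ, 0 < ε →
    ∃ K : Set Ω, IsCompact K ∧
      (fun x => (m : EReal) - (ε : EReal) + (Kᶜ).indicator (fun _ => (n : EReal)) x) ∈ H

/-- `H` is closed under `liminf`: `liminf_n h_n ∈ H` for every sequence `(h_n)` in `H`
with `h_n ≥ c` for some constant `c ∈ ℝ`. -/
def LiminfClosedB (H : Set (Ω → EReal)) : Prop :=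
  ∀ h : ℕ → Ω → EReal, (∀ n, h n ∈ H) → (∃ c : ℝ, ∀ n x, (c : EReal) ≤ h n x) →
    (fun x => liminf (fun n => h n x) atTop) ∈ H

/-- `H` is convex. -/
def ConvexB (H : Set (Ω → EReal)) : Prop :=
  ∀ f ∈ H, ∀ g ∈ H, ∀ t : ℝ, 0 ≤ t → t ≤ 1 →
    (fun x => (t : EReal) * f x + ((1 - t : ℝ) : EReal) * g x) ∈ H

/-- `h` is (the coercion of) a bounded continuous real-valued function. -/
def IsCbB (h : Ω → EReal) : Prop :=
  Continuous h ∧ ∃ C : ℝ, ∀ x, -(C : EReal) ≤ h x ∧ h x ≤ (C : EReal)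

/-- `h` is (the coercion of) a bounded upper semicontinuous real-valued function. -/
def IsUbB (h : Ω → EReal) : Prop :=
  UpperSemicontinuous h ∧ ∃ C : ℝ, ∀ x, -(C : EReal) ≤ h x ∧ h x ≤ (C : EReal)

/-- `H` is regular: for every Borel probability measure `μ`, the supremum of `⟨h,μ⟩` over
`H ∩ U_b` coincides with the supremum over `H ∩ C_b`. -/
def RegularB (H : Set (Ω → EReal)) : Prop :=
  ∀ μ : Measure Ω, IsProbabilityMeasure μ →
    sSup {x : EReal | ∃ h ∈ H, IsUbB h ∧ x = ePair h μ} =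
      sSup {x : EReal | ∃ h ∈ H, IsCbB h ∧ x = ePair h μ}

/-- The polar `H°` of `H ⊆ L⁰_{b-}`: all finite positive Borel measures `μ` with
`⟨f,μ⟩ ≤ 1` for all `f ∈ H`. -/
def polarB (H : Set (Ω → EReal)) : Set (Measure Ω) :=
  {μ | IsFiniteMeasure μ ∧ ∀ f ∈ H, ePair f μ ≤ 1}

/-- The bipolar `H°°` of `H ⊆ L⁰_{b-}`. -/
def bipolarB (H : Set (Ω → EReal)) : Set (Ω → EReal) :=
  {f | f ∈ L0b ∧ ∀ μ ∈ polarB H, ePair f μ ≤ 1}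

/-- The superhedging functional `φ(f) = inf{m ∈ ℝ : m + h ≥ f for some h ∈ H}` (the
infimum of the empty set being `+∞`). -/
noncomputable def sprice (H : Set (Ω → EReal)) (f : Ω → EReal) : EReal :=
  sInf ((fun m : ℝ => (m : EReal)) ''
    {m : ℝ | ∃ h ∈ H, ∀ x, f x ≤ (m : EReal) + h x})

end Defs


private lemma my_ereal_sub_coe_eq_coe_iff (x : EReal) (m r : ℝ) :
    x - (m : EReal) = (r : EReal) ↔ x = ((r + m : ℝ) : EReal) := by
  induction x using EReal.rec with
  | bot => simp [EReal.bot_sub, ← EReal.coe_add]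
  | coe a =>
      rw [show ((a : EReal) - (m : EReal)) = ((a - m : ℝ) : EReal) by norm_cast]
      constructor <;> intro h <;> (norm_cast at h ⊢) <;> linarith
  | top => simp [EReal.top_sub_coe, ← EReal.coe_add]

private lemma my_const_mem_image_iff {Ω : Type*} (H : Set (Ω → EReal)) (m r : ℝ) :
    (fun _ : Ω => (r : EReal)) ∈ (fun h => fun x => h x - (m : EReal)) '' H ↔
      (fun _ : Ω => ((r + m : ℝ) : EReal)) ∈ H := by
  constructor
  · rintro ⟨h, hH, heq⟩
    have hh : h = fun _ => ((r + m : ℝ) : EReal) := by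
      funext x
      exact (my_ereal_sub_coe_eq_coe_iff (h x) m r).1 (congrFun heq x)
    rwa [hh] at hH
  · intro hH
    refine ⟨_, hH, ?_⟩
    funext x
    show ((r + m : ℝ) : EReal) - (m : EReal) = (r : EReal)
    rw [show (((r + m : ℝ) : EReal) - (m : EReal)) = ((r + m - m : ℝ) : EReal) by norm_cast]
    norm_num

/-- **Lemma 2.2** in Bartl–Kupper, "A pointwise bipolar theorem": if `H ⊆ L⁰_{b-}` is
monotone and closed under `liminf`, then `H` is nontrivial (nonempty and `≠ L⁰_{b-}`) if
and only if `H − m` is normalized for a unique `m ∈ ℝ`. -/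
theorem nontrivial_iff_normalized_translate
    {Ω : Type*} [MetricSpace Ω] [MeasurableSpace Ω] [BorelSpace Ω]
    (H : Set (Ω → EReal)) (hsub : H ⊆ L0b)
    (hmono : MonotoneB H) (hliminf : LiminfClosedB H) :
    (H.Nonempty ∧ H ≠ L0b) ↔
      ∃! m : ℝ, NormalizedB ((fun h => fun x => h x - (m : EReal)) '' H) := by
  classical
  have constL0b : ∀ c : ℝ, (fun _ : Ω => (c : EReal)) ∈ L0b :=
    fun c => ⟨measurable_const, c, fun _ => le_rfl⟩
  have hmonoC : ∀ c d : ℝ, c ≤ d → (fun _ : Ω => (d : EReal)) ∈ H →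
      (fun _ : Ω => (c : EReal)) ∈ H := by
    intro c d hcd hd
    exact hmono _ (constL0b c) ⟨_, hd, fun x => by exact_mod_cast hcd⟩
  constructor
  · rintro ⟨⟨h0, hh0⟩, hne⟩
    set S : Set ℝ := {c | (fun _ : Ω => (c : EReal)) ∈ H} with hSdef
    have hSne : S.Nonempty := by
      obtain ⟨_, c, hc⟩ := hsub hh0
      exact ⟨c, hmono _ (constL0b c) ⟨h0, hh0, hc⟩⟩
    have hSbdd : BddAbove S := by
      by_contra hb
      rw [not_bddAbove_iff] at hb
      have hn : ∀ n : ℕ, (fun _ : Ω => ((n : ℝ) : EReal)) ∈ H := by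
        intro n
        obtain ⟨c, hcS, hnc⟩ := hb n
        exact hmonoC _ _ hnc.le hcS
      have hlim : (fun _ : Ω => liminf (fun n : ℕ => (((n : ℝ) : EReal))) atTop) ∈ H :=
        hliminf _ hn ⟨0, fun n x => by exact_mod_cast Nat.cast_nonneg n⟩
      have htop : liminf (fun n : ℕ => (((n : ℝ) : EReal))) atTop = ⊤ := by
        rw [EReal.eq_top_iff_forall_lt]
        intro y
        have h1 : ((y : EReal)) < ((y + 1 : ℝ) : EReal) := by exact_mod_cast lt_add_one y
        refine h1.trans_le (Filter.le_liminf_of_le ?_ ?_)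
        · exact Filter.isCobounded_ge_of_top
        · filter_upwards [Filter.eventually_ge_atTop (Nat.ceil (y + 1))] with n hn
          exact_mod_cast (Nat.ceil_le.1 hn)
      apply hne
      apply Set.Subset.antisymm hsub
      intro f hf
      refine hmono f hf ⟨_, hlim, fun x => ?_⟩
      rw [htop]; exact le_top
    set m := sSup S with hmdef
    have hmem : ∀ n : ℕ, (m - 1 / (n + 1)) ∈ S := by
      intro n
      have hlt : m - 1 / (n + 1) < m := by
        have : (0 : ℝ) < 1 / (n + 1) := by positivity
        linarith
      obtain ⟨c, hcS, hltc⟩ := exists_lt_of_lt_csSup hSne hlt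
      exact hmonoC _ _ hltc.le hcS
    have hto : Tendsto (fun n : ℕ => ((m - 1 / (n + 1) : ℝ) : EReal)) atTop (nhds (m : EReal)) := by
      have hreal : Tendsto (fun n : ℕ => (m - 1 / (n + 1) : ℝ)) atTop (nhds m) := by
        have := tendsto_const_nhds (x := m) (f := atTop (α := ℕ)) |>.sub
          tendsto_one_div_add_atTop_nhds_zero_nat
        simpa using this
      exact (continuous_coe_real_ereal.tendsto m).comp hreal
    have hmH : (fun _ : Ω => (m : EReal)) ∈ H := by
      have hbelow : ∃ c : ℝ, ∀ (n : ℕ) (x : Ω), (c : EReal) ≤ ((m - 1 / (n + 1) : ℝ) : EReal) := by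
        refine ⟨m - 1, fun n x => ?_⟩
        have h1 : (1 : ℝ) / (n + 1) ≤ 1 := by
          rw [div_le_one (by positivity)]
          simp
        exact_mod_cast (by linarith : m - 1 ≤ m - 1 / (n + 1))
      have := hliminf (fun n _ => ((m - 1 / (n + 1) : ℝ) : EReal)) (fun n => hmem n) hbelow
      simpa only [hto.liminf_eq] using this
    refine ⟨m, ⟨?_, ?_⟩, ?_⟩
    · have := (my_const_mem_image_iff H m 0).2 (by simpa using hmH)
      simpa using this
    · intro ε hε hmem'
      rw [my_const_mem_image_iff] at hmem'
      have : ε + m ≤ m := le_csSup hSbdd hmem'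
      linarith
    · rintro m' ⟨h0', hpos'⟩
      have hm' : (fun _ : Ω => (m' : EReal)) ∈ H := by
        have := (my_const_mem_image_iff H m' 0).1 h0'
        simpa using this
      have hle : m' ≤ m := le_csSup hSbdd hm'
      by_contra hne'
      have hlt : m' < m := lt_of_le_of_ne hle hne'
      refine hpos' (m - m') (by linarith) ?_
      rw [my_const_mem_image_iff]
      simpa [show m - m' + m' = m by ring] using hmH
  · rintro ⟨m, ⟨h0, hpos⟩, -⟩
    have hm : (fun _ : Ω => (m : EReal)) ∈ H := by
      have := (my_const_mem_image_iff H m 0).1 h0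
      simpa using this
    refine ⟨⟨_, hm⟩, ?_⟩
    intro hEq
    refine hpos 1 one_pos ?_
    rw [my_const_mem_image_iff, hEq]
    exact constL0b (1 + m)
end

section
/- Let H ⊆ L⁰_{b-} be monotone, normalized and closed under liminf, and define φ(f) := inf{m ∈ ℝ : m + h ≥ f pointwise for some h ∈ H}. Then φ is continuous from below on L⁰_{b-}: for every sequence (f_n) in L⁰_{b-} increasing pointwise to f ∈ L⁰_{b-}, one has φ(f) = lim_n φ(f_n). -/
open MeasureTheory Filter ENNReal NNReal

/-!
If `φ(f_n) < m` for all `n`, choose `h_n ∈ H` with `f_n ≤ m + h_n`. The `h_n` inherit a common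
lower bound from the `f_n`, so `liminf h_n ∈ H`, and `liminf f_n ≤ m + liminf h_n` gives
`φ(liminf f_n) ≤ m`. For an increasing sequence `liminf f_n = sup f_n = f`, so
`φ(f) ≤ sup φ(f_n)`; the reverse inequality is monotonicity of `φ`.
-/

open Filter

lemma EReal.liminf_const_add_le {ι : Type*} {l : Filter ι} [l.NeBot] (m : ℝ) (u : ι → EReal) :
    liminf (fun i => (m : EReal) + u i) l ≤ m + liminf u l := by
  have h := EReal.liminf_add_le (u := fun _ => (m : EReal)) (v := u) (f := l) (by simp) (by simp)
  rwa [limsup_const] at h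

section Sprice

variable {Ω : Type*} {H : Set (Ω → EReal)}

lemma sprice_mono {f g : Ω → EReal} (hfg : f ≤ g) :
    sprice H f ≤ sprice H g :=
  sInf_le_sInf <| Set.image_mono fun _ ⟨h, hH, hle⟩ => ⟨h, hH, fun x => (hfg x).trans (hle x)⟩

lemma sprice_le_of_le_add {f h : Ω → EReal} {m : ℝ} (hH : h ∈ H) (hle : ∀ x, f x ≤ m + h x) :
    sprice H f ≤ m :=
  sInf_le ⟨m, ⟨h, hH, hle⟩, rfl⟩

lemma exists_mem_le_add_of_sprice_lt {f : Ω → EReal} {m : ℝ} (hf : sprice H f < m) :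
    ∃ h ∈ H, ∀ x, f x ≤ m + h x := by
  obtain ⟨_, ⟨k, ⟨h, hH, hle⟩, rfl⟩, hkm⟩ := sInf_lt_iff.1 hf
  exact ⟨h, hH, fun x => (hle x).trans (add_le_add_left hkm.le _)⟩

lemma sprice_liminf_le_iSup (hliminf : LiminfClosedB H) {fn : ℕ → Ω → EReal} {c : ℝ}
    (hc : ∀ n x, (c : EReal) ≤ fn n x) :
    sprice H (fun x => liminf (fun n => fn n x) atTop) ≤ ⨆ n, sprice H (fn n) := by
  refine EReal.le_of_forall_lt_iff_le.1 fun m hm => ?_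
  choose h hH hle using fun n =>
    exists_mem_le_add_of_sprice_lt ((le_iSup (fun n => sprice H (fn n)) n).trans_lt hm)
  have hbdd : ∀ n x, ((c - m : ℝ) : EReal) ≤ h n x := fun n x => by
    rw [EReal.coe_sub, EReal.sub_le_iff_le_add (by simp) (by simp), add_comm]
    exact (hc n x).trans (hle n x)
  refine sprice_le_of_le_add (hliminf h hH ⟨c - m, hbdd⟩) fun x => ?_
  calc liminf (fun n => fn n x) atTop
      ≤ liminf (fun n => (m : EReal) + h n x) atTop :=
        liminf_le_liminf (Eventually.of_forall fun n => hle n x)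
    _ ≤ m + liminf (fun n => h n x) atTop := EReal.liminf_const_add_le m _

lemma sprice_iSup_of_monotone (hliminf : LiminfClosedB H) {fn : ℕ → Ω → EReal}
    (hmono : Monotone fn) {c : ℝ} (hc : ∀ x, (c : EReal) ≤ fn 0 x) :
    sprice H (⨆ n, fn n) = ⨆ n, sprice H (fn n) := by
  refine le_antisymm ?_ (iSup_le fun n => sprice_mono (le_iSup fn n))
  have hsup : ⨆ n, fn n = fun x => liminf (fun n => fn n x) atTop := funext fun x => by
    rw [iSup_apply, (tendsto_atTop_iSup fun _ _ hab => hmono hab x).liminf_eq]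
  rw [hsup]
  exact sprice_liminf_le_iSup hliminf fun n x => (hc x).trans (hmono n.zero_le x)

end Sprice

theorem sprice_continuous_from_below_general
    {Ω : Type*} [MetricSpace Ω] [MeasurableSpace Ω]
    (H : Set (Ω → EReal))
    (hliminf : LiminfClosedB H)
    (fn : ℕ → Ω → EReal) (f : Ω → EReal)
    (hfn : ∀ n, fn n ∈ L0b)
    (hincr : Monotone fn) (hlim : ∀ x, f x = ⨆ n, fn n x) :
    Tendsto (fun n => sprice H (fn n)) atTop (nhds (sprice H f)) := by
  obtain rfl : f = ⨆ n, fn n := funext fun x => (hlim x).trans (iSup_apply).symm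
  obtain ⟨c, hc⟩ := (hfn 0).2
  rw [sprice_iSup_of_monotone hliminf hincr hc]
  exact tendsto_atTop_iSup fun _ _ hnk => sprice_mono (hincr hnk)

/-- (From the proof of Proposition 2.4 in Bartl–Kupper, "A pointwise bipolar theorem".)
Let `H ⊆ L⁰_{b-}` be monotone, normalized and closed under `liminf`, and let
`φ(f) = inf{m ∈ ℝ : m + h ≥ f for some h ∈ H}`.  Then `φ` is continuous from below: for
every sequence `(f_n)` in `L⁰_{b-}` increasing pointwise to `f ∈ L⁰_{b-}` one has
`φ(f) = lim_n φ(f_n)`. -/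
theorem sprice_continuous_from_below
    {Ω : Type*} [MetricSpace Ω] [MeasurableSpace Ω] [BorelSpace Ω]
    (H : Set (Ω → EReal)) (hsub : H ⊆ L0b)
    (hmono : MonotoneB H) (hnorm : NormalizedB H) (hliminf : LiminfClosedB H)
    (fn : ℕ → Ω → EReal) (f : Ω → EReal)
    (hfn : ∀ n, fn n ∈ L0b) (hf : f ∈ L0b)
    (hincr : Monotone fn) (hlim : ∀ x, f x = ⨆ n, fn n x) :
    Tendsto (fun n => sprice H (fn n)) atTop (nhds (sprice H f)) :=
  sprice_continuous_from_below_general H hliminf fn f hfn hincr hlim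
end

section
/- Let H ⊆ L⁰_{b-} be monotone and normalized, and define φ(f) := inf{m ∈ ℝ : m + h ≥ f pointwise for some h ∈ H}. Then for every Borel probability measure μ on Ω one has sup_{f ∈ C_b} (⟨f,μ⟩ − φ(f)) = sup_{f ∈ H∩C_b} ⟨f,μ⟩ and sup_{f ∈ U_b} (⟨f,μ⟩ − φ(f)) = sup_{f ∈ H∩U_b} ⟨f,μ⟩; moreover, for every μ ∈ ca₊ that is not a probability measure, sup_{f ∈ C_b} (⟨f,μ⟩ − φ(f)) = +∞. -/
open MeasureTheory Filter ENNReal NNReal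

/-! If `f ≤ m + h'` with `h' ∈ H`, monotonicity puts `f - m` into `H`, and for a probability
measure `⟨f - m, μ⟩ = ⟨f, μ⟩ - m`; taking the infimum over such `m` bounds `⟨f, μ⟩ - φ(f)` by
the supremum of `⟨·, μ⟩` over `H`, while `φ ≤ 0` on `H` gives the reverse inequality.
Normalization forces `φ(c) = c` for constants, so `⟨c, μ⟩ - φ(c) = (μ(Ω) - 1) c`, which is
unbounded in `c` unless `μ(Ω) = 1`. -/

namespace EReal

lemma coe_sub_sInf_image_coe_le {r : ℝ} {S : Set ℝ} {R : EReal}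
    (h : ∀ m ∈ S, ((r - m : ℝ) : EReal) ≤ R) : (r : EReal) - sInf ((↑) '' S) ≤ R := by
  rcases S.eq_empty_or_nonempty with rfl | ⟨m, hm⟩
  · simp
  induction R using EReal.rec with
  | bot => exact absurd (le_bot_iff.1 (h m hm)) (EReal.coe_ne_bot _)
  | top => exact le_top
  | coe ρ =>
    have hlow : ((r - ρ : ℝ) : EReal) ≤ sInf ((↑) '' S) := by
      refine le_sInf ?_
      rintro _ ⟨m, hm, rfl⟩
      have := EReal.coe_le_coe_iff.1 (h m hm)
      exact EReal.coe_le_coe_iff.2 (by linarith)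
    calc (r : EReal) - sInf ((↑) '' S) ≤ r - ((r - ρ : ℝ) : EReal) := sub_le_sub le_rfl hlow
      _ = ρ := by rw [← EReal.coe_sub, _root_.sub_sub_cancel]

lemma continuous_sub_coe (m : ℝ) : Continuous fun x : EReal => x - m := by
  simp_rw [sub_eq_add_neg, ← EReal.coe_neg]
  exact continuous_iff_continuousAt.2 fun x =>
    (EReal.continuousAt_add (Or.inr (coe_ne_bot _)) (Or.inr (coe_ne_top _))).comp
      (continuous_id.prodMk continuous_const).continuousAt

lemma monotone_sub_coe (m : ℝ) : Monotone fun x : EReal => x - m :=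
  fun _ _ hxy => sub_le_sub hxy le_rfl

end EReal

section

variable {Ω : Type*}

/-- The boundedness clause shared by `IsCbB` and `IsUbB`. -/
def EBounded (h : Ω → EReal) : Prop :=
  ∃ C : ℝ, ∀ x, -(C : EReal) ≤ h x ∧ h x ≤ (C : EReal)

lemma eBounded_coe_iff {g : Ω → ℝ} :
    EBounded (fun x => (g x : EReal)) ↔ ∃ C, ∀ x, |g x| ≤ C := by
  simp only [EBounded, abs_le, ← EReal.coe_neg, EReal.coe_le_coe_iff]

lemma EBounded.exists_eq_coe {h : Ω → EReal} (hb : EBounded h) :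
    ∃ g : Ω → ℝ, (∃ C, ∀ x, |g x| ≤ C) ∧ h = fun x => (g x : EReal) := by
  obtain ⟨C, hC⟩ := hb
  have hrep : h = fun x => ((h x).toReal : EReal) := funext fun x =>
    (EReal.coe_toReal ((hC x).2.trans_lt (EReal.coe_lt_top C)).ne
      ((EReal.bot_lt_coe (-C)).trans_le (by rw [EReal.coe_neg]; exact (hC x).1)).ne').symm
  refine ⟨fun x => (h x).toReal, ?_, hrep⟩
  rw [← eBounded_coe_iff, ← hrep]
  exact ⟨C, hC⟩

lemma EBounded.sub_const {h : Ω → EReal} (hb : EBounded h) (m : ℝ) :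
    EBounded fun x => h x - m := by
  obtain ⟨g, ⟨C, hC⟩, rfl⟩ := hb.exists_eq_coe
  simp_rw [← EReal.coe_sub]
  exact eBounded_coe_iff.2 ⟨C + |m|, fun x => (abs_sub _ _).trans (by linarith [hC x])⟩

section Topology

variable [TopologicalSpace Ω] {h : Ω → EReal}

lemma IsCbB.sub_const (hh : IsCbB h) (m : ℝ) : IsCbB fun x => h x - m :=
  ⟨(EReal.continuous_sub_coe m).comp hh.1, EBounded.sub_const hh.2 m⟩

lemma IsUbB.sub_const (hh : IsUbB h) (m : ℝ) : IsUbB fun x => h x - m :=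
  ⟨(EReal.continuous_sub_coe m).comp_upperSemicontinuous hh.1 (EReal.monotone_sub_coe m),
    EBounded.sub_const hh.2 m⟩

lemma isCbB_const (c : ℝ) : IsCbB fun _ : Ω => (c : EReal) :=
  ⟨continuous_const, eBounded_coe_iff.2 ⟨|c|, fun _ => le_rfl⟩⟩

end Topology

lemma sprice_le_zero_of_mem {H : Set (Ω → EReal)} {h : Ω → EReal} (hh : h ∈ H) :
    sprice H h ≤ 0 :=
  sInf_le ⟨0, ⟨h, hh, fun x => by simp⟩, rfl⟩

variable [MeasurableSpace Ω] {H : Set (Ω → EReal)}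

lemma coe_mem_L0b {g : Ω → ℝ} (hg : Measurable g) {c : ℝ} (hc : ∀ x, c ≤ g x) :
    (fun x => (g x : EReal)) ∈ L0b :=
  ⟨measurable_coe_real_ereal.comp hg, c, fun x => EReal.coe_le_coe_iff.2 (hc x)⟩

lemma ePair_coe {μ : Measure Ω} {g : Ω → ℝ} (hg : Integrable g μ) :
    ePair (fun x => (g x : EReal)) μ = ((∫ x, g x ∂μ : ℝ) : EReal) := by
  have hpos : ∀ r : ℝ, ERealPosPart r = ENNReal.ofReal r := fun r => by simp [ERealPosPart]
  simp only [ePair, ← EReal.coe_neg, hpos]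
  rw [integral_eq_lintegral_pos_part_sub_lintegral_neg_part hg, EReal.coe_sub,
    EReal.coe_ennreal_toReal hg.lintegral_lt_top.ne,
    EReal.coe_ennreal_toReal (by simpa using hg.neg.lintegral_lt_top.ne)]

lemma const_le_of_le_add_mem (hmono : MonotoneB H) (hnorm : NormalizedB H) {f h : Ω → EReal}
    {c m : ℝ} (hf : ∀ x, (c : EReal) ≤ f x) (hh : h ∈ H) (hle : ∀ x, f x ≤ m + h x) :
    c ≤ m := by
  have hmem : (fun _ : Ω => ((c - m : ℝ) : EReal)) ∈ H := by
    refine hmono _ (coe_mem_L0b measurable_const fun _ => le_rfl) ⟨h, hh, fun x => ?_⟩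
    rw [EReal.coe_sub]
    exact EReal.sub_le_of_le_add' ((hf x).trans (hle x))
  by_contra! hlt
  exact hnorm.2 _ (sub_pos.2 hlt) hmem

lemma le_sprice (hmono : MonotoneB H) (hnorm : NormalizedB H) {f : Ω → EReal} {c : ℝ}
    (hf : ∀ x, (c : EReal) ≤ f x) : (c : EReal) ≤ sprice H f := by
  refine le_sInf ?_
  rintro _ ⟨m, ⟨h, hh, hle⟩, rfl⟩
  exact EReal.coe_le_coe_iff.2 (const_le_of_le_add_mem hmono hnorm hf hh hle)

lemma sprice_const (hmono : MonotoneB H) (hnorm : NormalizedB H) (c : ℝ) :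
    sprice H (fun _ : Ω => (c : EReal)) = c :=
  le_antisymm (sInf_le ⟨c, ⟨_, hnorm.1, fun _ => by simp⟩, rfl⟩)
    (le_sprice hmono hnorm fun _ => le_rfl)

theorem sSup_sub_sprice_eq (hmono : MonotoneB H) {P : (Ω → EReal) → Prop}
    (hPm : ∀ h, P h → Measurable h) (hPb : ∀ h, P h → EBounded h)
    (hPsub : ∀ h, P h → ∀ m : ℝ, P fun x => h x - m)
    (μ : Measure Ω) [IsProbabilityMeasure μ] :
    sSup {x : EReal | ∃ h, P h ∧ x = ePair h μ - sprice H h} =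
      sSup {x : EReal | ∃ h ∈ H, P h ∧ x = ePair h μ} := by
  refine le_antisymm (sSup_le ?_) (sSup_le ?_)
  · rintro _ ⟨h, hP, rfl⟩
    obtain ⟨g, ⟨C, hC⟩, rfl⟩ := (hPb h hP).exists_eq_coe
    have hg : Measurable g := by simpa using (hPm _ hP).ereal_toReal
    have hgi : Integrable g μ := .of_bound hg.aestronglyMeasurable C (ae_of_all _ hC)
    rw [ePair_coe hgi]
    refine EReal.coe_sub_sInf_image_coe_le fun m ⟨h', hh', hle⟩ =>
      le_sSup ⟨fun x => ((g x - m : ℝ) : EReal), ?_, ?_, ?_⟩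
    · refine hmono _ (coe_mem_L0b (hg.sub_const m) (c := -C - m) fun x => ?_)
        ⟨h', hh', fun x => ?_⟩
      · linarith [(abs_le.1 (hC x)).1]
      · rw [EReal.coe_sub]
        exact EReal.sub_le_of_le_add' (hle x)
    · simpa only [EReal.coe_sub] using hPsub _ hP m
    · rw [ePair_coe (g := fun x => g x - m) (hgi.sub (integrable_const m)),
        integral_sub hgi (integrable_const m), integral_const]
      simp
  · rintro _ ⟨h, hh, hP, rfl⟩
    exact le_sSup_of_le ⟨h, hP, rfl⟩ <| by
      simpa using EReal.sub_le_sub le_rfl (sprice_le_zero_of_mem hh)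

theorem sSup_sub_sprice_eq_top [TopologicalSpace Ω] (hmono : MonotoneB H)
    (hnorm : NormalizedB H) (μ : Measure Ω) [IsFiniteMeasure μ] (hμ : μ Set.univ ≠ 1) :
    sSup {x : EReal | ∃ h, IsCbB h ∧ x = ePair h μ - sprice H h} = ⊤ := by
  set t := μ.real Set.univ
  have ht : t - 1 ≠ 0 := sub_ne_zero.2 fun h => hμ ((ENNReal.toReal_eq_one_iff _).1 h)
  have hconst : ∀ c : ℝ, (((t - 1) * c : ℝ) : EReal) ∈
      {x : EReal | ∃ h, IsCbB h ∧ x = ePair h μ - sprice H h} := fun c =>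
    ⟨fun _ => c, isCbB_const c, by
      rw [ePair_coe (integrable_const c), sprice_const hmono hnorm, integral_const,
        ← EReal.coe_sub, smul_eq_mul, sub_one_mul]⟩
  refine sSup_eq_top.2 fun b hb => ?_
  obtain ⟨r, hbr, -⟩ := EReal.lt_iff_exists_real_btwn.1 hb
  exact ⟨_, hconst (r / (t - 1)), by rwa [mul_div_cancel₀ _ ht]⟩

end

theorem sprice_conjugate_general
    {Ω : Type*} [MetricSpace Ω] [MeasurableSpace Ω] [BorelSpace Ω]
    (H : Set (Ω → EReal))
    (hmono : MonotoneB H) (hnorm : NormalizedB H) :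
    (∀ μ : Measure Ω, IsProbabilityMeasure μ →
      sSup {x : EReal | ∃ h, IsCbB h ∧ x = ePair h μ - sprice H h} =
        sSup {x : EReal | ∃ h ∈ H, IsCbB h ∧ x = ePair h μ} ∧
      sSup {x : EReal | ∃ h, IsUbB h ∧ x = ePair h μ - sprice H h} =
        sSup {x : EReal | ∃ h ∈ H, IsUbB h ∧ x = ePair h μ}) ∧
    (∀ μ : Measure Ω, IsFiniteMeasure μ → ¬ IsProbabilityMeasure μ →
      sSup {x : EReal | ∃ h, IsCbB h ∧ x = ePair h μ - sprice H h} = ⊤) := by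
  refine ⟨fun μ _ => ⟨?_, ?_⟩,
    fun μ _ hμ => sSup_sub_sprice_eq_top hmono hnorm μ fun h => hμ ⟨h⟩⟩
    <;> exact sSup_sub_sprice_eq hmono (fun _ hh => hh.1.measurable) (fun _ hh => hh.2)
      (fun _ hh => hh.sub_const) μ

/-- (From the proof of Proposition 2.4 in Bartl–Kupper, "A pointwise bipolar theorem".)
Let `H ⊆ L⁰_{b-}` be monotone and normalized and let
`φ(f) = inf{m ∈ ℝ : m + h ≥ f for some h ∈ H}`.  Then for every Borel probability measure
`μ` one has `sup_{f ∈ C_b} (⟨f,μ⟩ − φ(f)) = sup_{f ∈ H ∩ C_b} ⟨f,μ⟩` and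
`sup_{f ∈ U_b} (⟨f,μ⟩ − φ(f)) = sup_{f ∈ H ∩ U_b} ⟨f,μ⟩`; moreover, for every finite
positive Borel measure `μ` which is not a probability measure,
`sup_{f ∈ C_b} (⟨f,μ⟩ − φ(f)) = +∞`. -/
theorem sprice_conjugate
    {Ω : Type*} [MetricSpace Ω] [MeasurableSpace Ω] [BorelSpace Ω]
    (H : Set (Ω → EReal)) (hsub : H ⊆ L0b)
    (hmono : MonotoneB H) (hnorm : NormalizedB H) :
    (∀ μ : Measure Ω, IsProbabilityMeasure μ →
      sSup {x : EReal | ∃ h, IsCbB h ∧ x = ePair h μ - sprice H h} =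
        sSup {x : EReal | ∃ h ∈ H, IsCbB h ∧ x = ePair h μ} ∧
      sSup {x : EReal | ∃ h, IsUbB h ∧ x = ePair h μ - sprice H h} =
        sSup {x : EReal | ∃ h ∈ H, IsUbB h ∧ x = ePair h μ}) ∧
    (∀ μ : Measure Ω, IsFiniteMeasure μ → ¬ IsProbabilityMeasure μ →
      sSup {x : EReal | ∃ h, IsCbB h ∧ x = ePair h μ - sprice H h} = ⊤) :=
  sprice_conjugate_general H hmono hnorm
end

section
/- Let H ⊆ L⁰_{b-} be monotone, normalized and tight, and define φ(f) := inf{m ∈ ℝ : m + h ≥ f pointwise for some h ∈ H}. Then for every sequence (f_n) of bounded continuous functions decreasing pointwise to 0, one has lim_n φ(f_n) = 0. -/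
open MeasureTheory Filter ENNReal NNReal

/-- (From the proof of Proposition 2.4 in Bartl–Kupper, "A pointwise bipolar theorem".)
Let `H ⊆ L⁰_{b-}` be monotone, normalized and tight, and let
`φ(f) = inf{m ∈ ℝ : m + h ≥ f for some h ∈ H}`.  Then for every sequence `(f_n)` of bounded
continuous (real-valued) functions decreasing pointwise to `0` one has `lim_n φ(f_n) = 0`. -/
theorem sprice_continuous_from_above_Cb
    {Ω : Type*} [MetricSpace Ω] [MeasurableSpace Ω] [BorelSpace Ω]
    (H : Set (Ω → EReal)) (hsub : H ⊆ L0b)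
    (hmono : MonotoneB H) (hnorm : NormalizedB H) (htight : TightB H)
    (fn : ℕ → Ω → ℝ)
    (hcont : ∀ n, Continuous (fn n)) (hbdd : ∀ n, ∃ C : ℝ, ∀ x, |fn n x| ≤ C)
    (hdecr : ∀ x, Antitone (fun n => fn n x))
    (hlim : ∀ x, Tendsto (fun n => fn n x) atTop (nhds 0)) :
    Tendsto (fun n => sprice H (fun x => ((fn n x : ℝ) : EReal))) atTop
      (nhds (0 : EReal)) := by
  -- each fn n is nonnegative
  have hfn_nonneg : ∀ n x, 0 ≤ fn n x := by
    intro n x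
    refine le_of_tendsto (hlim x) ?_
    filter_upwards [eventually_ge_atTop n] with k hk
    exact hdecr x hk
  set a : ℕ → EReal := fun n => sprice H (fun x => ((fn n x : ℝ) : EReal)) with ha
  -- nonnegativity of a
  have ha_nonneg : ∀ n, (0 : EReal) ≤ a n := by
    intro n
    refine le_sInf ?_
    rintro y ⟨m, ⟨h, hH, hle⟩, rfl⟩
    by_contra hlt
    push_neg at hlt
    have hm0 : m < 0 := by exact_mod_cast hlt
    have hconst : (fun _ : Ω => ((-m : ℝ) : EReal)) ∈ H := by
      refine hmono _ ⟨measurable_const, ⟨-m, fun x => le_refl _⟩⟩ ⟨h, hH, ?_⟩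
      intro x
      have h0 : (0 : EReal) ≤ (m : EReal) + h x :=
        le_trans (show (0 : EReal) ≤ ((fn n x : ℝ) : EReal) by
          exact_mod_cast hfn_nonneg n x) (hle x)
      have key2 : ∀ b : EReal, (0 : EReal) ≤ (m : EReal) + b → ((-m : ℝ) : EReal) ≤ b := by
        intro b hb
        induction b using EReal.rec with
        | bot => simp at hb
        | coe r =>
          have : (0 : ℝ) ≤ m + r := by exact_mod_cast hb
          exact_mod_cast (by linarith : -m ≤ r)
        | top => exact le_top
      exact key2 (h x) h0
    exact hnorm.2 (-m) (by linarith) hconst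
  -- antitonicity of a
  have ha_anti : Antitone a := by
    intro i j hij
    refine sInf_le_sInf ?_
    rintro y ⟨m, ⟨h, hH, hle⟩, rfl⟩
    refine ⟨m, ⟨h, hH, fun x => le_trans ?_ (hle x)⟩, rfl⟩
    show ((fn j x : ℝ) : EReal) ≤ ((fn i x : ℝ) : EReal)
    exact_mod_cast hdecr x hij
  -- key estimate
  have key : ∀ ε : ℝ, 0 < ε → ∃ N, a N ≤ ((2 * ε : ℝ) : EReal) := by
    intro ε hε
    obtain ⟨C, hC⟩ := hbdd 0
    set n₀ : ℕ := ⌈C⌉₊ with hn₀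
    have hH0 : (fun _ : Ω => ((0 : ℝ) : EReal)) ∈ H := by
      simpa using hnorm.1
    obtain ⟨K, hKc, hKH⟩ := htight 0 hH0 n₀ ε hε
    -- uniform smallness on K
    obtain ⟨N, hN⟩ : ∃ N, ∀ x ∈ K, fn N x < ε := by
      have hcov : K ⊆ ⋃ n, {y | fn n y < ε} := by
        intro x _
        obtain ⟨n, hn⟩ := ((hlim x).eventually (gt_mem_nhds hε)).exists
        exact Set.mem_iUnion.2 ⟨n, hn⟩
      obtain ⟨t, ht⟩ := hKc.elim_finite_subcover (fun n => {y | fn n y < ε})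
        (fun n => isOpen_lt (hcont n) continuous_const) hcov
      refine ⟨t.sup id, fun x hx => ?_⟩
      obtain ⟨n, hn, hxn⟩ := Set.mem_iUnion₂.1 (ht hx)
      exact lt_of_le_of_lt (hdecr x (Finset.le_sup (f := id) hn)) hxn
    refine ⟨N, sInf_le ⟨2 * ε, ⟨_, hKH, ?_⟩, rfl⟩⟩
    intro x
    by_cases hx : x ∈ K
    · rw [Set.indicator_of_notMem (by simpa using hx)]
      have h1 : fn N x ≤ ε := le_of_lt (hN x hx)
      show ((fn N x : ℝ) : EReal) ≤ ((2 * ε : ℝ) : EReal) + (((0 : ℝ) : EReal) - (ε : EReal) + 0)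
      exact_mod_cast (show fn N x ≤ 2 * ε + (0 - ε + 0) by linarith)
    · rw [Set.indicator_of_mem (by simpa using hx)]
      have h1 : fn N x ≤ C := le_trans (hdecr x (Nat.zero_le N)) (le_trans (le_abs_self _) (hC x))
      have h2 : C ≤ (n₀ : ℝ) := Nat.le_ceil C
      show ((fn N x : ℝ) : EReal) ≤ ((2 * ε : ℝ) : EReal) +
        (((0 : ℝ) : EReal) - (ε : EReal) + (((n₀ : ℝ) : ℝ) : EReal))
      exact_mod_cast (show fn N x ≤ 2 * ε + (0 - ε + (n₀ : ℝ)) by linarith)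
  -- conclude
  have hconv : Tendsto a atTop (nhds (⨅ n, a n)) := tendsto_atTop_iInf ha_anti
  have hinf : (⨅ n, a n) = 0 := by
    refine le_antisymm ?_ (le_iInf ha_nonneg)
    by_contra hlt
    push_neg at hlt
    obtain ⟨r, hr0, hrb⟩ := EReal.exists_between_coe_real hlt
    have hr : 0 < r := by exact_mod_cast hr0
    obtain ⟨N, hN⟩ := key (r / 2) (by linarith)
    have : (⨅ n, a n) ≤ (r : EReal) := le_trans (iInf_le _ N) (by
      have : (2 * (r / 2) : ℝ) = r := by ring
      rwa [this] at hN)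
    exact absurd this (not_le.2 hrb)
  rw [hinf] at hconv
  exact hconv
end

section
/- For every μ ∈ ca₊(Ω) one has sup_{h ∈ H∩C_b(Ω)} ⟨h,μ⟩ = max( sup_{h₁ ∈ H₁} ⟨h₁,μ₁⟩ , sup_{h₂ ∈ H₂} ⟨h₂,μ₂⟩ ) = sup_{h ∈ H} ⟨h,μ⟩. Consequently, H° = {μ ∈ ca₊(Ω) : μ₁ ∈ H₁°, μ₂ ∈ H₂°}. -/
open MeasureTheory Filter ENNReal NNReal

section Defs

variable {Ω : Type*} [TopologicalSpace Ω] [MeasurableSpace Ω]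

/-- The sublinear pricing functional `π(f) = sup_{μ ∈ H°} ⟨f,μ⟩` associated with `H`. -/
noncomputable def priceH (H : Set (Ω → ℝ≥0∞)) (f : Ω → ℝ≥0∞) : ℝ≥0∞ :=
  sSup {x : ℝ≥0∞ | ∃ μ ∈ polar H, x = ∫⁻ ω, f ω ∂μ}

end Defs

section Transport

variable {Ω₁ Ω₂ : Type*}
  [TopologicalSpace Ω₁] [MeasurableSpace Ω₁]
  [TopologicalSpace Ω₂] [MeasurableSpace Ω₂]

/-- The set `H` of all nonnegative Borel functions on the product space dominated by a sum
`h₁ ⊕ h₂` with `π₁(h₁) + π₂(h₂) ≤ 1`. -/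
def transportSet (H₁ : Set (Ω₁ → ℝ≥0∞)) (H₂ : Set (Ω₂ → ℝ≥0∞)) :
    Set (Ω₁ × Ω₂ → ℝ≥0∞) :=
  {f | Measurable f ∧ ∃ (h₁ : Ω₁ → ℝ≥0∞) (h₂ : Ω₂ → ℝ≥0∞),
    Measurable h₁ ∧ Measurable h₂ ∧ (∀ ω, f ω ≤ h₁ ω.1 + h₂ ω.2) ∧
    priceH H₁ h₁ + priceH H₂ h₂ ≤ 1}

/-- The finite positive Borel measures on the product space whose first marginal lies in
`H₁°` and whose second marginal lies in `H₂°`. -/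
def marginalSet (H₁ : Set (Ω₁ → ℝ≥0∞)) (H₂ : Set (Ω₂ → ℝ≥0∞)) :
    Set (Measure (Ω₁ × Ω₂)) :=
  {μ | IsFiniteMeasure μ ∧ μ.map Prod.fst ∈ polar H₁ ∧ μ.map Prod.snd ∈ polar H₂}

/-- The transport functional
`π(f) = sup{⟨f,μ⟩ : μ ∈ ca₊(Ω₁ × Ω₂), μ₁ ∈ H₁°, μ₂ ∈ H₂°}`. -/
noncomputable def transportPrice (H₁ : Set (Ω₁ → ℝ≥0∞)) (H₂ : Set (Ω₂ → ℝ≥0∞))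
    (f : Ω₁ × Ω₂ → ℝ≥0∞) : ℝ≥0∞ :=
  sSup {x : ℝ≥0∞ | ∃ μ ∈ marginalSet H₁ H₂, x = ∫⁻ ω, f ω ∂μ}

end Transport

/-! If `⟨g, μᵢ⟩ ≤ c` for all `g ∈ Hᵢ`, then `c⁻¹ μᵢ ∈ Hᵢ°`, so `⟨hᵢ, μᵢ⟩ ≤ c πᵢ(hᵢ)`; integrating
`f ≤ h₁ ⊕ h₂` gives `⟨f, μ⟩ ≤ c (π₁(h₁) + π₂(h₂)) ≤ c`. Taking `c = 1` gives `μ ∈ H°` whenever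
the marginals lie in the polars, and `c` just above the maximum gives the upper bound.
Conversely `πᵢ(hᵢ) ≤ 1` for `hᵢ ∈ Hᵢ`, so `hᵢ ∘ prᵢ ∈ H`. By Vitali–Carathéodory and
monotonicity the supremum over `Hᵢ` is already attained along bounded upper semicontinuous
members, hence, by regularity, along `Hᵢ ∩ C_b`, and these lift to `H ∩ C_b(Ω)`. -/

open Set

section Price

variable {Ω : Type*} [MeasurableSpace Ω] {H : Set (Ω → ℝ≥0∞)} {ν : Measure Ω}

lemma priceH_le_one_of_mem {h : Ω → ℝ≥0∞} (hh : h ∈ H) : priceH H h ≤ 1 :=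
  sSup_le fun _ ⟨_, hμ, hx⟩ => hx ▸ hμ.2 h hh

lemma priceH_zero : priceH H 0 = 0 :=
  nonpos_iff_eq_zero.1 <| sSup_le fun _ ⟨_, _, hx⟩ => by simp [hx]

lemma lintegral_le_priceH (hν : ν ∈ polar H) (f : Ω → ℝ≥0∞) : ∫⁻ ω, f ω ∂ν ≤ priceH H f :=
  le_sSup ⟨ν, hν, rfl⟩

lemma lintegral_le_sSup_lintegral {h : Ω → ℝ≥0∞} (hh : h ∈ H) :
    ∫⁻ ω, h ω ∂ν ≤ sSup {x : ℝ≥0∞ | ∃ g ∈ H, x = ∫⁻ ω, g ω ∂ν} :=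
  le_sSup ⟨h, hh, rfl⟩

lemma inv_smul_mem_polar [IsFiniteMeasure ν] {c : ℝ≥0∞} (hc : c ≠ 0)
    (hH : ∀ g ∈ H, ∫⁻ ω, g ω ∂ν ≤ c) : c⁻¹ • ν ∈ polar H := by
  refine ⟨⟨?_⟩, fun g hg => ?_⟩
  · simpa using ENNReal.mul_lt_top (ENNReal.inv_ne_top.2 hc).lt_top (measure_lt_top ν univ)
  · rw [lintegral_smul_measure, smul_eq_mul]
    exact (mul_le_mul_right (hH g hg) _).trans (ENNReal.inv_mul_le_one c)

lemma lintegral_le_priceH_mul [IsFiniteMeasure ν] {c : ℝ≥0∞} (hc0 : c ≠ 0) (hc : c ≠ ∞)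
    (hH : ∀ g ∈ H, ∫⁻ ω, g ω ∂ν ≤ c) (f : Ω → ℝ≥0∞) :
    ∫⁻ ω, f ω ∂ν ≤ priceH H f * c :=
  calc ∫⁻ ω, f ω ∂ν = (c⁻¹ * ∫⁻ ω, f ω ∂ν) * c := by
        rw [mul_comm, ← mul_assoc, ENNReal.mul_inv_cancel hc0 hc, one_mul]
    _ = (∫⁻ ω, f ω ∂(c⁻¹ • ν)) * c := by rw [lintegral_smul_measure, smul_eq_mul]
    _ ≤ priceH H f * c := by gcongr; exact lintegral_le_priceH (inv_smul_mem_polar hc0 hH) f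

end Price

lemma sSup_lintegral_map_isCb_le {Ω Ω' : Type*} [TopologicalSpace Ω] [MeasurableSpace Ω]
    [TopologicalSpace Ω'] [MeasurableSpace Ω'] {p : Ω → Ω'} (hp : Continuous p)
    (hpm : Measurable p) (μ : Measure Ω) {H : Set (Ω → ℝ≥0∞)} {H' : Set (Ω' → ℝ≥0∞)}
    (hmeas : ∀ g ∈ H', Measurable g) (hcomp : ∀ g ∈ H', g ∘ p ∈ H) :
    sSup {x : ℝ≥0∞ | ∃ g ∈ H', IsCb g ∧ x = ∫⁻ ω, g ω ∂(μ.map p)} ≤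
      sSup {x : ℝ≥0∞ | ∃ h ∈ H, IsCb h ∧ x = ∫⁻ ω, h ω ∂μ} := by
  refine sSup_le fun _ ⟨g, hg, ⟨hg_cont, C, hC⟩, hx⟩ => le_sSup ?_
  refine ⟨g ∘ p, hcomp g hg, ⟨hg_cont.comp hp, C, fun ω => hC (p ω)⟩, ?_⟩
  rw [hx, lintegral_map (hmeas g hg) hpm]
  rfl

section Regularity

variable {Ω : Type*} [TopologicalSpace Ω] [MeasurableSpace Ω] [BorelSpace Ω]
  {H : Set (Ω → ℝ≥0∞)} (μ : Measure Ω) [IsFiniteMeasure μ] [μ.WeaklyRegular]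

lemma lintegral_le_sSup_isUb (hH : MonotoneSet H) {h : Ω → ℝ≥0∞} (hh : h ∈ H) :
    ∫⁻ ω, h ω ∂μ ≤ sSup {x : ℝ≥0∞ | ∃ g ∈ H, IsUb g ∧ x = ∫⁻ ω, g ω ∂μ} := by
  rw [lintegral_eq_nnreal]
  refine iSup₂_le fun φ hφh => ENNReal.le_of_forall_pos_le_add fun ε hε _ => ?_
  rw [← SimpleFunc.lintegral_eq_lintegral]
  obtain ⟨C, hC⟩ := φ.exists_forall_le
  have hφ_fin : ∫⁻ ω, (φ ω : ℝ≥0∞) ∂μ ≠ ∞ :=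
    (IsFiniteMeasure.lintegral_lt_top_of_bounded_to_ennreal μ
      ⟨C, fun ω => ENNReal.coe_le_coe.2 (hC ω)⟩).ne
  obtain ⟨g, hgφ, hg_usc, hφg⟩ :=
    exists_upperSemicontinuous_le_lintegral_le (μ := μ) φ hφ_fin (ENNReal.coe_ne_zero.2 hε.ne')
  have hg_usc' : UpperSemicontinuous fun ω => (g ω : ℝ≥0∞) :=
    ENNReal.continuous_coe.comp_upperSemicontinuous hg_usc ENNReal.coe_mono
  have hgh : ∀ ω, (g ω : ℝ≥0∞) ≤ h ω := fun ω => (ENNReal.coe_le_coe.2 (hgφ ω)).trans (hφh ω)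
  have hgH : (fun ω => (g ω : ℝ≥0∞)) ∈ H := hH _ hg_usc'.measurable ⟨h, hh, hgh⟩
  have hg_ub : IsUb fun ω => (g ω : ℝ≥0∞) :=
    ⟨hg_usc', C, fun ω => ENNReal.coe_le_coe.2 ((hgφ ω).trans (hC ω))⟩
  have hg_le : ∫⁻ ω, (g ω : ℝ≥0∞) ∂μ ≤
      sSup {x : ℝ≥0∞ | ∃ g ∈ H, IsUb g ∧ x = ∫⁻ ω, g ω ∂μ} :=
    le_sSup ⟨_, hgH, hg_ub, rfl⟩
  simp only [SimpleFunc.coe_map, Function.comp_apply]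
  exact hφg.trans (by gcongr)

lemma sSup_lintegral_le_sSup_isCb (hH : MonotoneSet H) (hreg : RegularSet H) :
    sSup {x : ℝ≥0∞ | ∃ h ∈ H, x = ∫⁻ ω, h ω ∂μ} ≤
      sSup {x : ℝ≥0∞ | ∃ h ∈ H, IsCb h ∧ x = ∫⁻ ω, h ω ∂μ} :=
  sSup_le fun _ ⟨_, hh, hx⟩ => hx ▸ (lintegral_le_sSup_isUb μ hH hh).trans (hreg μ ‹_›).le

end Regularity

section Product

variable {Ω₁ Ω₂ : Type*} [MeasurableSpace Ω₁] [MeasurableSpace Ω₂]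
  {H₁ : Set (Ω₁ → ℝ≥0∞)} {H₂ : Set (Ω₂ → ℝ≥0∞)}

lemma comp_fst_mem_transportSet {h₁ : Ω₁ → ℝ≥0∞} (hh₁ : h₁ ∈ H₁) (hm : Measurable h₁) :
    h₁ ∘ Prod.fst ∈ transportSet H₁ H₂ :=
  ⟨hm.comp measurable_fst, h₁, 0, hm, measurable_const, fun _ => le_self_add,
    by simpa [priceH_zero] using priceH_le_one_of_mem hh₁⟩

lemma comp_snd_mem_transportSet {h₂ : Ω₂ → ℝ≥0∞} (hh₂ : h₂ ∈ H₂) (hm : Measurable h₂) :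
    h₂ ∘ Prod.snd ∈ transportSet H₁ H₂ :=
  ⟨hm.comp measurable_snd, 0, h₂, measurable_const, hm, fun _ => le_add_self,
    by simpa [priceH_zero] using priceH_le_one_of_mem hh₂⟩

lemma lintegral_le_of_mem_transportSet {μ : Measure (Ω₁ × Ω₂)} [IsFiniteMeasure μ]
    {c : ℝ≥0∞} (hc0 : c ≠ 0) (hc : c ≠ ∞)
    (hc₁ : ∀ g ∈ H₁, ∫⁻ ω, g ω ∂(μ.map Prod.fst) ≤ c)
    (hc₂ : ∀ g ∈ H₂, ∫⁻ ω, g ω ∂(μ.map Prod.snd) ≤ c)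
    {f : Ω₁ × Ω₂ → ℝ≥0∞} (hf : f ∈ transportSet H₁ H₂) : ∫⁻ ω, f ω ∂μ ≤ c := by
  obtain ⟨-, h₁, h₂, hm₁, hm₂, hf_le, hprice⟩ := hf
  calc ∫⁻ ω, f ω ∂μ ≤ ∫⁻ ω, h₁ ω.1 + h₂ ω.2 ∂μ := lintegral_mono hf_le
    _ = ∫⁻ ω, h₁ ω ∂(μ.map Prod.fst) + ∫⁻ ω, h₂ ω ∂(μ.map Prod.snd) := by
      rw [lintegral_map hm₁ measurable_fst, lintegral_map hm₂ measurable_snd]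
      exact lintegral_add_left (hm₁.comp measurable_fst) _
    _ ≤ priceH H₁ h₁ * c + priceH H₂ h₂ * c :=
      add_le_add (lintegral_le_priceH_mul hc0 hc hc₁ h₁) (lintegral_le_priceH_mul hc0 hc hc₂ h₂)
    _ ≤ c := by rw [← add_mul]; exact mul_le_of_le_one_left' hprice

lemma marginalSet_subset_polar_transportSet :
    marginalSet H₁ H₂ ⊆ polar (transportSet H₁ H₂) :=
  fun _ ⟨hμ, hμ₁, hμ₂⟩ => ⟨hμ, fun _ hf =>
    lintegral_le_of_mem_transportSet one_ne_zero one_ne_top hμ₁.2 hμ₂.2 hf⟩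

lemma polar_transportSet_subset_marginalSet (hmeas₁ : ∀ f ∈ H₁, Measurable f)
    (hmeas₂ : ∀ f ∈ H₂, Measurable f) :
    polar (transportSet H₁ H₂) ⊆ marginalSet H₁ H₂ := by
  rintro _ ⟨hμ, hμT⟩
  refine ⟨hμ, ⟨inferInstance, fun g hg => ?_⟩, ⟨inferInstance, fun g hg => ?_⟩⟩
  · rw [lintegral_map (hmeas₁ g hg) measurable_fst]
    exact hμT _ (comp_fst_mem_transportSet hg (hmeas₁ g hg))
  · rw [lintegral_map (hmeas₂ g hg) measurable_snd]
    exact hμT _ (comp_snd_mem_transportSet hg (hmeas₂ g hg))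

lemma sSup_lintegral_transportSet_le (μ : Measure (Ω₁ × Ω₂)) [IsFiniteMeasure μ] :
    sSup {x : ℝ≥0∞ | ∃ h ∈ transportSet H₁ H₂, x = ∫⁻ ω, h ω ∂μ} ≤
      max (sSup {x : ℝ≥0∞ | ∃ h₁ ∈ H₁, x = ∫⁻ ω, h₁ ω ∂(μ.map Prod.fst)})
        (sSup {x : ℝ≥0∞ | ∃ h₂ ∈ H₂, x = ∫⁻ ω, h₂ ω ∂(μ.map Prod.snd)}) := by
  refine sSup_le fun _ ⟨h, hh, hx⟩ => hx ▸ ENNReal.le_of_forall_pos_le_add fun ε hε hM => ?_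
  refine lintegral_le_of_mem_transportSet (by positivity)
    (ENNReal.add_ne_top.2 ⟨hM.ne, ENNReal.coe_ne_top⟩) (fun g hg => ?_)
    (fun g hg => ?_) hh
  · exact (lintegral_le_sSup_lintegral hg).trans ((le_max_left _ _).trans le_self_add)
  · exact (lintegral_le_sSup_lintegral hg).trans ((le_max_right _ _).trans le_self_add)

end Product

theorem transport_support_function_general
    {Ω₁ Ω₂ : Type*}
    [MetricSpace Ω₁] [MeasurableSpace Ω₁] [BorelSpace Ω₁]
    [MetricSpace Ω₂] [MeasurableSpace Ω₂] [BorelSpace Ω₂]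
    (H₁ : Set (Ω₁ → ℝ≥0∞)) (H₂ : Set (Ω₂ → ℝ≥0∞))
    (hmeas₁ : ∀ f ∈ H₁, Measurable f) (hmeas₂ : ∀ f ∈ H₂, Measurable f)
    (hmono₁ : MonotoneSet H₁) (hmono₂ : MonotoneSet H₂)
    (hreg₁ : RegularSet H₁) (hreg₂ : RegularSet H₂) :
    (∀ μ : Measure (Ω₁ × Ω₂), IsFiniteMeasure μ →
      sSup {x : ℝ≥0∞ | ∃ h ∈ transportSet H₁ H₂, IsCb h ∧ x = ∫⁻ ω, h ω ∂μ} =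
        max (sSup {x : ℝ≥0∞ | ∃ h₁ ∈ H₁, x = ∫⁻ ω, h₁ ω ∂(μ.map Prod.fst)})
            (sSup {x : ℝ≥0∞ | ∃ h₂ ∈ H₂, x = ∫⁻ ω, h₂ ω ∂(μ.map Prod.snd)}) ∧
      sSup {x : ℝ≥0∞ | ∃ h ∈ transportSet H₁ H₂, x = ∫⁻ ω, h ω ∂μ} =
        max (sSup {x : ℝ≥0∞ | ∃ h₁ ∈ H₁, x = ∫⁻ ω, h₁ ω ∂(μ.map Prod.fst)})
            (sSup {x : ℝ≥0∞ | ∃ h₂ ∈ H₂, x = ∫⁻ ω, h₂ ω ∂(μ.map Prod.snd)})) ∧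
    polar (transportSet H₁ H₂) = marginalSet H₁ H₂ := by
  refine ⟨fun μ _ => ?_, (polar_transportSet_subset_marginalSet hmeas₁ hmeas₂).antisymm
    marginalSet_subset_polar_transportSet⟩
  have h_le := sSup_lintegral_transportSet_le (H₁ := H₁) (H₂ := H₂) μ
  have h_ge := max_le
    ((sSup_lintegral_le_sSup_isCb _ hmono₁ hreg₁).trans
      (sSup_lintegral_map_isCb_le continuous_fst measurable_fst μ hmeas₁
        fun g hg => comp_fst_mem_transportSet hg (hmeas₁ g hg)))
    ((sSup_lintegral_le_sSup_isCb _ hmono₂ hreg₂).trans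
      (sSup_lintegral_map_isCb_le continuous_snd measurable_snd μ hmeas₂
        fun g hg => comp_snd_mem_transportSet hg (hmeas₂ g hg)))
  have h_cb : sSup {x : ℝ≥0∞ | ∃ h ∈ transportSet H₁ H₂, IsCb h ∧ x = ∫⁻ ω, h ω ∂μ} ≤
      sSup {x : ℝ≥0∞ | ∃ h ∈ transportSet H₁ H₂, x = ∫⁻ ω, h ω ∂μ} :=
    sSup_le_sSup fun _ ⟨h, hh, _, hx⟩ => ⟨h, hh, hx⟩
  exact ⟨(h_cb.trans h_le).antisymm h_ge, h_le.antisymm (h_ge.trans h_cb)⟩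

/-- (Equation (4.1) in the proof of Theorem 4.1 in Bartl–Kupper, "A pointwise bipolar
theorem".)  For every `μ ∈ ca₊(Ω₁ × Ω₂)` one has
`sup_{h ∈ H ∩ C_b} ⟨h,μ⟩ = max(sup_{h₁ ∈ H₁} ⟨h₁,μ₁⟩, sup_{h₂ ∈ H₂} ⟨h₂,μ₂⟩)
  = sup_{h ∈ H} ⟨h,μ⟩`; consequently `H° = {μ : μ₁ ∈ H₁°, μ₂ ∈ H₂°}`. -/
theorem transport_support_function
    {Ω₁ Ω₂ : Type*}
    [MetricSpace Ω₁] [SigmaCompactSpace Ω₁] [MeasurableSpace Ω₁] [BorelSpace Ω₁]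
    [MetricSpace Ω₂] [SigmaCompactSpace Ω₂] [MeasurableSpace Ω₂] [BorelSpace Ω₂]
    (H₁ : Set (Ω₁ → ℝ≥0∞)) (H₂ : Set (Ω₂ → ℝ≥0∞))
    (hmeas₁ : ∀ f ∈ H₁, Measurable f) (hmeas₂ : ∀ f ∈ H₂, Measurable f)
    (hne₁ : H₁.Nonempty) (hne₂ : H₂.Nonempty)
    (hmono₁ : MonotoneSet H₁) (hmono₂ : MonotoneSet H₂)
    (hconv₁ : ConvexSet H₁) (hconv₂ : ConvexSet H₂)
    (hreg₁ : RegularSet H₁) (hreg₂ : RegularSet H₂)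
    (hliminf₁ : LiminfClosed H₁) (hliminf₂ : LiminfClosed H₂) :
    (∀ μ : Measure (Ω₁ × Ω₂), IsFiniteMeasure μ →
      sSup {x : ℝ≥0∞ | ∃ h ∈ transportSet H₁ H₂, IsCb h ∧ x = ∫⁻ ω, h ω ∂μ} =
        max (sSup {x : ℝ≥0∞ | ∃ h₁ ∈ H₁, x = ∫⁻ ω, h₁ ω ∂(μ.map Prod.fst)})
            (sSup {x : ℝ≥0∞ | ∃ h₂ ∈ H₂, x = ∫⁻ ω, h₂ ω ∂(μ.map Prod.snd)}) ∧
      sSup {x : ℝ≥0∞ | ∃ h ∈ transportSet H₁ H₂, x = ∫⁻ ω, h ω ∂μ} =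
        max (sSup {x : ℝ≥0∞ | ∃ h₁ ∈ H₁, x = ∫⁻ ω, h₁ ω ∂(μ.map Prod.fst)})
            (sSup {x : ℝ≥0∞ | ∃ h₂ ∈ H₂, x = ∫⁻ ω, h₂ ω ∂(μ.map Prod.snd)})) ∧
    polar (transportSet H₁ H₂) = marginalSet H₁ H₂ :=
  transport_support_function_general H₁ H₂ hmeas₁ hmeas₂ hmono₁ hmono₂ hreg₁ hreg₂
end

section
/- Suppose that for i = 1,2 there exist measures μᵢ* ∈ ca₊(Ωᵢ) such that μᵢ ≪ μᵢ* for all μᵢ ∈ Hᵢ°. Then H is closed under liminf; equivalently, for every pointwise increasing sequence (hⁿ) in H, the pointwise supremum sup_n hⁿ belongs to H. -/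
open MeasureTheory Filter ENNReal NNReal

/-!
Write `fₙ ≤ h₁ₙ ⊕ h₂ₙ` with `π₁(h₁ₙ) + π₂(h₂ₙ) ≤ 1`. A Komlós-type lemma gives forward convex
combinations `g₁ₙ` of `h₁ₙ, h₁ₙ₊₁, …` converging `ν₁`-a.e.; let `g₂ₙ` use the same weights on
the `h₂ₖ`. Then `liminf fₙ ≤ limsup g₁ₙ ⊕ liminf g₂ₙ`. Every `μ₁ ∈ H₁°` is `≪ ν₁`, so
`limsup g₁ₙ = liminf g₁ₙ` `μ₁`-a.e., and Fatou on both factors bounds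
`⟨limsup g₁ₙ, μ₁⟩ + ⟨liminf g₂ₙ, μ₂⟩` by a `liminf` of numbers `≤ 1`.

For the Komlós lemma (after Delbaen–Schachermayer) take `ψ(t) = t / (1 + t)` and near-maximisers
`gₙ` of `∫ ψ(g) dν₁` over convex combinations of the tails `(h₁ₖ)ₖ≥ₙ`. Uniform concavity of `ψ`
turns near-optimality of `gₙ`, `gₘ` and of their midpoint into `‖ψ(gₙ) - ψ(gₘ)‖_{L²(ν₁)} → 0`,
and a subsequence converges a.e.
-/

open Topology

namespace ENNReal

lemma liminf_add_liminf_le (u v : ℕ → ℝ≥0∞) :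
    liminf u atTop + liminf v atTop ≤ liminf (u + v) atTop := by
  simp only [liminf_eq_iSup_iInf_of_nat]
  refine iSup_add_iSup_le fun n m => le_iSup_of_le (max n m) (le_iInf₂ fun k hk => ?_)
  exact add_le_add (iInf₂_le k (le_of_max_le_left hk)) (iInf₂_le k (le_of_max_le_right hk))

lemma liminf_add_le_limsup_add_liminf (u v : ℕ → ℝ≥0∞) :
    liminf (u + v) atTop ≤ limsup u atTop + liminf v atTop := by
  rw [limsup_eq_iInf_iSup_of_nat, ENNReal.iInf_add]
  refine le_iInf fun n => ?_
  calc liminf (u + v) atTop ≤ liminf (fun k => (⨆ i ≥ n, u i) + v k) atTop :=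
        liminf_le_liminf (eventually_atTop.mpr ⟨n, fun k hk =>
          add_le_add (le_iSup₂ (f := fun i (_ : i ≥ n) => u i) k hk) le_rfl⟩)
    _ = (⨆ i ≥ n, u i) + liminf v atTop :=
        liminf_const_add _ _ _ (by isBoundedDefault) (by isBoundedDefault)

end ENNReal

theorem MeasureTheory.exists_strictMono_ae_tendsto_of_cauchy_eLpNorm {α E : Type*}
    {m : MeasurableSpace α} {μ : Measure α} [NormedAddCommGroup E] [CompleteSpace E]
    {p : ℝ≥0∞} {f : ℕ → α → E} (hf : ∀ n, AEStronglyMeasurable (f n) μ) (hp : 1 ≤ p)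
    {B : ℕ → ℝ≥0∞} (hB : Tendsto B atTop (𝓝 0))
    (h_cau : ∀ N n m : ℕ, N ≤ n → N ≤ m → eLpNorm (f n - f m) p μ ≤ B N) :
    ∃ φ : ℕ → ℕ, StrictMono φ ∧ ∀ᵐ x ∂μ, ∃ l : E, Tendsto (fun j => f (φ j) x) atTop (𝓝 l) := by
  obtain ⟨φ, hφ, hBφ⟩ := extraction_forall_of_eventually fun j : ℕ =>
    hB.eventually_lt_const
      (ENNReal.pow_pos (ENNReal.inv_pos.mpr ENNReal.ofNat_ne_top) j : (0 : ℝ≥0∞) < 2⁻¹ ^ j)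
  refine ⟨φ, hφ, Lp.ae_tendsto_of_cauchy_eLpNorm (fun n => hf (φ n)) hp
    (B := fun j => 2⁻¹ ^ j) ?_ fun N n m hn hm => ?_⟩
  · simp [ENNReal.tsum_geometric, ENNReal.one_sub_inv_two]
  · exact (h_cau _ _ _ (hφ.monotone hn) (hφ.monotone hm)).trans_lt (hBφ N)

def tailWeights (n : ℕ) : Set (ℕ → ℝ≥0∞) := {w | (∀ k < n, w k = 0) ∧ ∑' k, w k = 1}

lemma tailWeights_anti : Antitone tailWeights := fun _ _ hnm _ hw =>
  ⟨fun k hk => hw.1 k (hk.trans_le hnm), hw.2⟩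

lemma single_mem_tailWeights (n : ℕ) : Pi.single n 1 ∈ tailWeights n :=
  ⟨fun _ hk => Pi.single_eq_of_ne hk.ne 1, tsum_pi_single n 1⟩

lemma midpoint_mem_tailWeights {n : ℕ} {w w' : ℕ → ℝ≥0∞} (hw : w ∈ tailWeights n)
    (hw' : w' ∈ tailWeights n) : (fun k => (w k + w' k) / 2) ∈ tailWeights n := by
  refine ⟨fun k hk => by simp [hw.1 k hk, hw'.1 k hk], ?_⟩
  simp only [div_eq_mul_inv, ENNReal.tsum_mul_right, ENNReal.tsum_add, hw.2, hw'.2,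
    one_add_one_eq_two]
  exact ENNReal.mul_inv_cancel two_ne_zero ENNReal.ofNat_ne_top

lemma iInf_ge_le_tsum_mul {n : ℕ} {w : ℕ → ℝ≥0∞} (hw : w ∈ tailWeights n) (u : ℕ → ℝ≥0∞) :
    ⨅ k ≥ n, u k ≤ ∑' k, w k * u k :=
  calc ⨅ k ≥ n, u k = ∑' k, w k * ⨅ i ≥ n, u i := by rw [ENNReal.tsum_mul_right, hw.2, one_mul]
    _ ≤ ∑' k, w k * u k := ENNReal.tsum_le_tsum fun k => by
      rcases lt_or_ge k n with hk | hk
      · simp [hw.1 k hk]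
      · gcongr
        exact iInf₂_le k hk

lemma liminf_le_liminf_tsum_mul {w : ℕ → ℕ → ℝ≥0∞} (hw : ∀ n, w n ∈ tailWeights n)
    (u : ℕ → ℝ≥0∞) : liminf u atTop ≤ liminf (fun n => ∑' k, w n k * u k) atTop := by
  rw [liminf_eq_iSup_iInf_of_nat]
  refine iSup_le fun n => le_liminf_of_le (by isBoundedDefault) (eventually_atTop.mpr ⟨n, ?_⟩)
  exact fun m hm => (biInf_mono fun k hk => hm.trans hk).trans (iInf_ge_le_tsum_mul (hw m) u)

noncomputable def convexCombo {Ω : Type*} (h : ℕ → Ω → ℝ≥0∞) (w : ℕ → ℝ≥0∞) (x : Ω) : ℝ≥0∞ :=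
  ∑' k, w k * h k x

lemma convexCombo_midpoint {Ω : Type*} (h : ℕ → Ω → ℝ≥0∞) (w w' : ℕ → ℝ≥0∞) (x : Ω) :
    convexCombo h (fun k => (w k + w' k) / 2) x = (convexCombo h w x + convexCombo h w' x) / 2 := by
  simp only [convexCombo, div_eq_mul_inv, ← ENNReal.tsum_add, ← ENNReal.tsum_mul_right]
  exact tsum_congr fun k => by ring

section ConvexCombo

variable {Ω : Type*} [MeasurableSpace Ω]

lemma measurable_convexCombo {h : ℕ → Ω → ℝ≥0∞} (hh : ∀ n, Measurable (h n))
    (w : ℕ → ℝ≥0∞) : Measurable (convexCombo h w) :=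
  Measurable.tsum fun k => (hh k).const_mul _

lemma lintegral_convexCombo {h : ℕ → Ω → ℝ≥0∞} (hh : ∀ n, Measurable (h n))
    (w : ℕ → ℝ≥0∞) (μ : Measure Ω) :
    ∫⁻ x, convexCombo h w x ∂μ = ∑' k, w k * ∫⁻ x, h k x ∂μ := by
  simp only [convexCombo]
  rw [lintegral_tsum fun k => ((hh k).const_mul _).aemeasurable]
  exact tsum_congr fun k => lintegral_const_mul _ (hh k)

end ConvexCombo

namespace Komlos

-- `t / (1 + t)`, written so that `psi ⊤ = 1` (in `ℝ≥0∞`, `⊤ / ⊤ = 0`)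
noncomputable def psi (t : ℝ≥0∞) : ℝ≥0∞ := 1 - (1 + t)⁻¹

noncomputable def psiInv (s : ℝ≥0∞) : ℝ≥0∞ := (1 - s)⁻¹ - 1

lemma psi_le_one (t : ℝ≥0∞) : psi t ≤ 1 := tsub_le_self

lemma psi_ne_top (t : ℝ≥0∞) : psi t ≠ ⊤ := ((psi_le_one t).trans_lt one_lt_top).ne

lemma psi_top : psi ⊤ = 1 := by simp [psi]

lemma psiInv_psi (t : ℝ≥0∞) : psiInv (psi t) = t := by
  rw [psi, psiInv, ENNReal.sub_sub_cancel one_ne_top (ENNReal.inv_le_one.mpr le_self_add), inv_inv,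
    ENNReal.add_sub_cancel_left one_ne_top]

lemma continuous_psi : Continuous psi :=
  (ENNReal.continuous_sub_left one_ne_top).comp (continuous_const_add 1).inv

lemma continuous_psiInv : Continuous psiInv :=
  (ENNReal.continuous_sub_right 1).comp (ENNReal.continuous_sub_left one_ne_top).inv

lemma toReal_psi {t : ℝ≥0∞} (ht : t ≠ ⊤) : (psi t).toReal = 1 - (1 + t.toReal)⁻¹ := by
  rw [psi, ENNReal.toReal_sub_of_le (ENNReal.inv_le_one.mpr le_self_add) one_ne_top,
    ENNReal.toReal_inv, ENNReal.toReal_add one_ne_top ht, ENNReal.toReal_one]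

lemma toReal_psi_mem_Icc (t : ℝ≥0∞) : (psi t).toReal ∈ Set.Icc (0 : ℝ) 1 :=
  ⟨ENNReal.toReal_nonneg, ENNReal.toReal_le_of_le_ofReal zero_le_one (by simpa using psi_le_one t)⟩

lemma toReal_psi_midpoint (a b : ℝ≥0∞) :
    ((psi a).toReal + (psi b).toReal) / 2 + ((psi a).toReal - (psi b).toReal) ^ 2 / 4 ≤
      (psi ((a + b) / 2)).toReal := by
  obtain ⟨ha0, ha1⟩ := toReal_psi_mem_Icc a
  obtain ⟨hb0, hb1⟩ := toReal_psi_mem_Icc b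
  rcases eq_or_ne a ⊤ with rfl | ha
  · simp only [psi_top, ENNReal.toReal_one, top_add, ENNReal.top_div_of_ne_top ENNReal.ofNat_ne_top]
    nlinarith
  rcases eq_or_ne b ⊤ with rfl | hb
  · simp only [psi_top, ENNReal.toReal_one, add_top, ENNReal.top_div_of_ne_top ENNReal.ofNat_ne_top]
    nlinarith
  have hmid : (a + b) / 2 ≠ ⊤ := ENNReal.div_ne_top (ENNReal.add_ne_top.mpr ⟨ha, hb⟩) two_ne_zero
  rw [toReal_psi ha, toReal_psi hb, toReal_psi hmid, ENNReal.toReal_div,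
    ENNReal.toReal_add ha hb, ENNReal.toReal_ofNat]
  have hx := ENNReal.toReal_nonneg (a := a)
  have hy := ENNReal.toReal_nonneg (a := b)
  generalize a.toReal = x at hx ⊢
  generalize b.toReal = y at hy ⊢
  have key : 1 - (1 + (x + y) / 2)⁻¹ - (((1 - (1 + x)⁻¹) + (1 - (1 + y)⁻¹)) / 2 +
      ((1 - (1 + x)⁻¹) - (1 - (1 + y)⁻¹)) ^ 2 / 4) =
      (x - y) ^ 2 * (x + y + 2 * x * y) / (4 * (2 + x + y) * (1 + x) ^ 2 * (1 + y) ^ 2) := by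
    field_simp
    ring
  have : 0 ≤ (x - y) ^ 2 * (x + y + 2 * x * y) / (4 * (2 + x + y) * (1 + x) ^ 2 * (1 + y) ^ 2) := by
    positivity
  linarith

lemma psi_midpoint (a b : ℝ≥0∞) :
    (psi a + psi b) / 2 + ‖(psi a).toReal - (psi b).toReal‖ₑ ^ 2 / 4 ≤ psi ((a + b) / 2) := by
  have hfin : (psi a + psi b) / 2 + ‖(psi a).toReal - (psi b).toReal‖ₑ ^ 2 / 4 ≠ ⊤ := by
    simp [ENNReal.div_eq_top, psi_ne_top]
  rw [← ENNReal.toReal_le_toReal hfin (psi_ne_top _),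
    ENNReal.toReal_add (by simp [ENNReal.div_eq_top, psi_ne_top]) (by simp [ENNReal.div_eq_top]),
    ENNReal.toReal_div, ENNReal.toReal_div, ENNReal.toReal_add (psi_ne_top a) (psi_ne_top b),
    ENNReal.toReal_pow, toReal_enorm, Real.norm_eq_abs, sq_abs]
  simpa using toReal_psi_midpoint a b

section Value

variable {Ω : Type*} [MeasurableSpace Ω] (ν : Measure Ω) (h : ℕ → Ω → ℝ≥0∞)

noncomputable def psiCombo (w : ℕ → ℝ≥0∞) (x : Ω) : ℝ := (psi (convexCombo h w x)).toReal

noncomputable def value (w : ℕ → ℝ≥0∞) : ℝ≥0∞ := ∫⁻ x, psi (convexCombo h w x) ∂ν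

noncomputable def tailSup (n : ℕ) : ℝ≥0∞ := ⨆ w ∈ tailWeights n, value ν h w

lemma antitone_tailSup : Antitone (tailSup ν h) := fun _ _ hnm =>
  biSup_mono fun _ hw => tailWeights_anti hnm hw

lemma tailSup_ne_top [IsFiniteMeasure ν] (n : ℕ) : tailSup ν h n ≠ ⊤ := by
  refine ne_top_of_le_ne_top (measure_ne_top ν Set.univ) (iSup₂_le fun w _ => ?_)
  calc value ν h w ≤ ∫⁻ _, 1 ∂ν := lintegral_mono fun x => psi_le_one _
    _ = ν Set.univ := lintegral_one

lemma exists_value_add_ge_tailSup [IsFiniteMeasure ν] (n : ℕ) {ε : ℝ≥0∞} (hε : ε ≠ 0) :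
    ∃ w ∈ tailWeights n, tailSup ν h n ≤ value ν h w + ε := by
  have hlt : tailSup ν h n < tailSup ν h n + ε := ENNReal.lt_add_right (tailSup_ne_top ν h n) hε
  rw [tailSup, ENNReal.biSup_add' ⟨_, single_mem_tailWeights n⟩] at hlt
  obtain ⟨w, hw, hlt⟩ := lt_biSup_iff.mp hlt
  exact ⟨w, hw, hlt.le⟩

variable {ν h} (hh : ∀ n, Measurable (h n))
include hh

lemma measurable_psiCombo (w : ℕ → ℝ≥0∞) : Measurable (psiCombo h w) :=
  (continuous_psi.measurable.comp (measurable_convexCombo hh w)).ennreal_toReal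

lemma lintegral_enorm_psiCombo_sub_sq_div_four_add_le {n : ℕ} {w w' : ℕ → ℝ≥0∞}
    (hw : w ∈ tailWeights n) (hw' : w' ∈ tailWeights n) :
    (∫⁻ x, ‖psiCombo h w x - psiCombo h w' x‖ₑ ^ 2 ∂ν) / 4 + (value ν h w + value ν h w') / 2 ≤
      tailSup ν h n := by
  have hψ (w) : Measurable fun x => psi (convexCombo h w x) :=
    continuous_psi.measurable.comp (measurable_convexCombo hh w)
  calc (∫⁻ x, ‖psiCombo h w x - psiCombo h w' x‖ₑ ^ 2 ∂ν) / 4 + (value ν h w + value ν h w') / 2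
      = ∫⁻ x, ((psi (convexCombo h w x) + psi (convexCombo h w' x)) / 2 +
          ‖psiCombo h w x - psiCombo h w' x‖ₑ ^ 2 / 4) ∂ν := by
        have hsum : Measurable fun x => psi (convexCombo h w x) + psi (convexCombo h w' x) :=
          (hψ w).add (hψ w')
        simp only [div_eq_mul_inv]
        rw [lintegral_add_left (hsum.mul_const _), lintegral_mul_const _ hsum,
          lintegral_add_left (hψ w), lintegral_mul_const' _ _ (by norm_num), add_comm]
        rfl
    _ ≤ value ν h (fun k => (w k + w' k) / 2) := lintegral_mono fun x => by
        simpa only [convexCombo_midpoint, psiCombo] using psi_midpoint _ _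
    _ ≤ tailSup ν h n := le_iSup₂_of_le _ (midpoint_mem_tailWeights hw hw') le_rfl

end Value

section NearMaximisers

variable {Ω : Type*} [MeasurableSpace Ω] {ν : Measure Ω} [IsFiniteMeasure ν] {h : ℕ → Ω → ℝ≥0∞}
  (hh : ∀ n, Measurable (h n)) {w : ℕ → ℕ → ℝ≥0∞} {ε : ℕ → ℝ≥0∞}
  (hw : ∀ n, w n ∈ tailWeights n) (hε : Antitone ε)
  (hmax : ∀ n, tailSup ν h n ≤ value ν h (w n) + ε n)
include hh hw hε hmax

lemma lintegral_enorm_psiCombo_sub_sq_le {N n m : ℕ} (hN : N ≤ n) (hnm : n ≤ m) :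
    ∫⁻ x, ‖psiCombo h (w n) x - psiCombo h (w m) x‖ₑ ^ 2 ∂ν ≤
      4 * (tailSup ν h N + ε N - ⨅ k, tailSup ν h k) := by
  set s := ⨅ k, tailSup ν h k
  set D := ∫⁻ x, ‖psiCombo h (w n) x - psiCombo h (w m) x‖ₑ ^ 2 ∂ν
  have hs : s ≠ ⊤ := ne_top_of_le_ne_top (tailSup_ne_top ν h 0) (iInf_le _ 0)
  have hs_le : s ≤ (value ν h (w n) + value ν h (w m)) / 2 + ε n :=
    calc s = s / 2 + s / 2 := (ENNReal.add_halves s).symm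
      _ ≤ (value ν h (w n) + ε n) / 2 + (value ν h (w m) + ε n) / 2 := by
        gcongr
        · exact (iInf_le _ n).trans (hmax n)
        · exact (iInf_le _ m).trans ((hmax m).trans (by gcongr; exact hε hnm))
      _ = (value ν h (w n) + value ν h (w m)) / 2 + ε n := by
        rw [← ENNReal.add_div, add_add_add_comm, ENNReal.add_div, ENNReal.add_div (a := ε n),
          ENNReal.add_halves]
  have key : D / 4 + s ≤ tailSup ν h N + ε N :=
    calc D / 4 + s ≤ D / 4 + (value ν h (w n) + value ν h (w m)) / 2 + ε n := by
          rw [add_assoc]; gcongr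
      _ ≤ tailSup ν h n + ε n := by
          gcongr
          exact lintegral_enorm_psiCombo_sub_sq_div_four_add_le hh (hw n)
            (tailWeights_anti hnm (hw m))
      _ ≤ tailSup ν h N + ε N := add_le_add (antitone_tailSup ν h hN) (hε hN)
  calc D = 4 * (D / 4) := (ENNReal.mul_div_cancel (by norm_num) (by norm_num)).symm
    _ ≤ 4 * (tailSup ν h N + ε N - s) := by
      gcongr
      exact ENNReal.le_sub_of_add_le_right hs key

lemma eLpNorm_psiCombo_sub_le {N n m : ℕ} (hn : N ≤ n) (hm : N ≤ m) :
    eLpNorm (psiCombo h (w n) - psiCombo h (w m)) 2 ν ≤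
      (4 * (tailSup ν h N + ε N - ⨅ k, tailSup ν h k)) ^ (1 / 2 : ℝ) := by
  wlog hnm : n ≤ m generalizing n m
  · rw [eLpNorm_sub_comm]
    exact this hm hn (le_of_not_ge hnm)
  rw [eLpNorm_eq_lintegral_rpow_enorm_toReal two_ne_zero ENNReal.ofNat_ne_top]
  simp only [ENNReal.toReal_ofNat, ENNReal.rpow_two, Pi.sub_apply]
  exact ENNReal.rpow_le_rpow (lintegral_enorm_psiCombo_sub_sq_le hh hw hε hmax hn hnm) (by norm_num)

end NearMaximisers

end Komlos

open Komlos in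
theorem exists_tailWeights_ae_tendsto_convexCombo {Ω : Type*} [MeasurableSpace Ω]
    (ν : Measure Ω) [IsFiniteMeasure ν] {h : ℕ → Ω → ℝ≥0∞} (hh : ∀ n, Measurable (h n)) :
    ∃ w : ℕ → ℕ → ℝ≥0∞, (∀ n, w n ∈ tailWeights n) ∧
      ∀ᵐ x ∂ν, ∃ l, Tendsto (fun n => convexCombo h (w n) x) atTop (𝓝 l) := by
  choose w hw hmax using fun n : ℕ =>
    exists_value_add_ge_tailSup ν h n (ENNReal.inv_ne_zero.mpr (ENNReal.natCast_ne_top n))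
  have hε : Antitone fun n : ℕ => (n : ℝ≥0∞)⁻¹ := fun _ _ hnm =>
    ENNReal.inv_le_inv.mpr (Nat.cast_le.mpr hnm)
  have hB : Tendsto (fun N : ℕ =>
      (4 * (tailSup ν h N + (N : ℝ≥0∞)⁻¹ - ⨅ k, tailSup ν h k)) ^ (1 / 2 : ℝ)) atTop (𝓝 0) := by
    have hs : ⨅ k, tailSup ν h k ≠ ⊤ := ne_top_of_le_ne_top (tailSup_ne_top ν h 0) (iInf_le _ 0)
    have h0 := ENNReal.Tendsto.sub ((tendsto_atTop_iInf (antitone_tailSup ν h)).add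
      ENNReal.tendsto_inv_nat_nhds_zero) tendsto_const_nhds (Or.inr hs)
    have h1 := ENNReal.Tendsto.const_mul h0 (Or.inr ENNReal.ofNat_ne_top) (a := 4)
    rw [add_zero, tsub_self, mul_zero] at h1
    simpa [Function.comp_def] using
      ((ENNReal.continuous_rpow_const (y := 1 / 2)).tendsto 0).comp h1
  obtain ⟨φ, hφ, hae⟩ := exists_strictMono_ae_tendsto_of_cauchy_eLpNorm
    (fun n => (measurable_psiCombo hh (w n)).aestronglyMeasurable) one_le_two hB
    fun N n m hn hm => eLpNorm_psiCombo_sub_le hh hw hε hmax hn hm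
  refine ⟨fun j => w (φ j), fun j => tailWeights_anti (hφ.id_le j) (hw _), ?_⟩
  filter_upwards [hae] with x ⟨l, hl⟩
  refine ⟨psiInv (ENNReal.ofReal l), ?_⟩
  have h2 := (continuous_psiInv.tendsto _).comp ((ENNReal.continuous_ofReal.tendsto l).comp hl)
  simpa [Function.comp_def, psiCombo, ENNReal.ofReal_toReal (psi_ne_top _), psiInv_psi] using h2

section Price

variable {Ω : Type*} [MeasurableSpace Ω]

lemma zero_mem_polar (H : Set (Ω → ℝ≥0∞)) : (0 : Measure Ω) ∈ polar H :=
  ⟨inferInstance, fun _ _ => by simp⟩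

lemma priceH_eq_biSup (H : Set (Ω → ℝ≥0∞)) (f : Ω → ℝ≥0∞) :
    priceH H f = ⨆ μ ∈ polar H, ∫⁻ x, f x ∂μ :=
  le_antisymm (sSup_le fun _ ⟨μ, hμ, hx⟩ => hx ▸ le_iSup₂_of_le μ hμ le_rfl)
    (iSup₂_le fun μ hμ => le_sSup ⟨μ, hμ, rfl⟩)

lemma lintegral_le_priceH_s15 {H : Set (Ω → ℝ≥0∞)} {μ : Measure Ω} (hμ : μ ∈ polar H)
    (f : Ω → ℝ≥0∞) : ∫⁻ x, f x ∂μ ≤ priceH H f :=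
  le_sSup ⟨μ, hμ, rfl⟩

lemma priceH_add_priceH_le {Ω' : Type*} [MeasurableSpace Ω'] {H : Set (Ω → ℝ≥0∞)}
    {H' : Set (Ω' → ℝ≥0∞)} {f : Ω → ℝ≥0∞} {f' : Ω' → ℝ≥0∞} {c : ℝ≥0∞}
    (h : ∀ μ ∈ polar H, ∀ μ' ∈ polar H', ∫⁻ x, f x ∂μ + ∫⁻ x, f' x ∂μ' ≤ c) :
    priceH H f + priceH H' f' ≤ c := by
  rw [priceH_eq_biSup, priceH_eq_biSup]
  exact ENNReal.biSup_add_biSup_le ⟨0, zero_mem_polar H⟩ ⟨0, zero_mem_polar H'⟩ h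

end Price

section LiminfClosed

variable {Ω₁ Ω₂ : Type*} {h₁ : ℕ → Ω₁ → ℝ≥0∞} {h₂ : ℕ → Ω₂ → ℝ≥0∞} {w : ℕ → ℕ → ℝ≥0∞}

lemma liminf_le_limsup_convexCombo_add_liminf_convexCombo {f : ℕ → Ω₁ × Ω₂ → ℝ≥0∞}
    (hle : ∀ n ω, f n ω ≤ h₁ n ω.1 + h₂ n ω.2) (hw : ∀ n, w n ∈ tailWeights n) (ω : Ω₁ × Ω₂) :
    liminf (fun n => f n ω) atTop ≤
      limsup (fun n => convexCombo h₁ (w n) ω.1) atTop +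
        liminf (fun n => convexCombo h₂ (w n) ω.2) atTop :=
  calc liminf (fun n => f n ω) atTop ≤ liminf (fun n => h₁ n ω.1 + h₂ n ω.2) atTop :=
        liminf_le_liminf (Eventually.of_forall fun n => hle n ω)
    _ ≤ liminf (fun n => ∑' k, w n k * (h₁ k ω.1 + h₂ k ω.2)) atTop :=
        liminf_le_liminf_tsum_mul hw _
    _ = liminf ((fun n => convexCombo h₁ (w n) ω.1) + fun n => convexCombo h₂ (w n) ω.2) atTop := by
        simp only [convexCombo, mul_add, ENNReal.tsum_add]
        rfl
    _ ≤ _ := ENNReal.liminf_add_le_limsup_add_liminf _ _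

variable [MeasurableSpace Ω₁] [MeasurableSpace Ω₂]

lemma lintegral_limsup_convexCombo_add_lintegral_liminf_convexCombo_le
    {H₁ : Set (Ω₁ → ℝ≥0∞)} {H₂ : Set (Ω₂ → ℝ≥0∞)} (hm₁ : ∀ n, Measurable (h₁ n))
    (hm₂ : ∀ n, Measurable (h₂ n)) (hprice : ∀ n, priceH H₁ (h₁ n) + priceH H₂ (h₂ n) ≤ 1)
    (hw : ∀ n, w n ∈ tailWeights n) {μ₁ : Measure Ω₁} (hμ₁ : μ₁ ∈ polar H₁)
    {μ₂ : Measure Ω₂} (hμ₂ : μ₂ ∈ polar H₂)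
    (hconv : ∀ᵐ x ∂μ₁, ∃ l, Tendsto (fun n => convexCombo h₁ (w n) x) atTop (𝓝 l)) :
    ∫⁻ x, limsup (fun n => convexCombo h₁ (w n) x) atTop ∂μ₁ +
      ∫⁻ y, liminf (fun n => convexCombo h₂ (w n) y) atTop ∂μ₂ ≤ 1 := by
  have hn (n : ℕ) : ∫⁻ x, convexCombo h₁ (w n) x ∂μ₁ + ∫⁻ y, convexCombo h₂ (w n) y ∂μ₂ ≤ 1 := by
    rw [lintegral_convexCombo hm₁, lintegral_convexCombo hm₂, ← ENNReal.tsum_add, ← (hw n).2]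
    refine ENNReal.tsum_le_tsum fun k => ?_
    rw [← mul_add]
    refine mul_le_of_le_one_right' ((add_le_add ?_ ?_).trans (hprice k))
    · exact lintegral_le_priceH_s15 hμ₁ _
    · exact lintegral_le_priceH_s15 hμ₂ _
  have hlim : ∀ᵐ x ∂μ₁, limsup (fun n => convexCombo h₁ (w n) x) atTop =
      liminf (fun n => convexCombo h₁ (w n) x) atTop :=
    hconv.mono fun _ ⟨_, hl⟩ => hl.limsup_eq.trans hl.liminf_eq.symm
  calc ∫⁻ x, limsup (fun n => convexCombo h₁ (w n) x) atTop ∂μ₁ +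
        ∫⁻ y, liminf (fun n => convexCombo h₂ (w n) y) atTop ∂μ₂
      = ∫⁻ x, liminf (fun n => convexCombo h₁ (w n) x) atTop ∂μ₁ +
        ∫⁻ y, liminf (fun n => convexCombo h₂ (w n) y) atTop ∂μ₂ := by
        rw [lintegral_congr_ae hlim]
    _ ≤ liminf (fun n => ∫⁻ x, convexCombo h₁ (w n) x ∂μ₁) atTop +
        liminf (fun n => ∫⁻ y, convexCombo h₂ (w n) y ∂μ₂) atTop :=
        add_le_add (lintegral_liminf_le fun n => measurable_convexCombo hm₁ (w n))
          (lintegral_liminf_le fun n => measurable_convexCombo hm₂ (w n))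
    _ ≤ liminf (fun n => ∫⁻ x, convexCombo h₁ (w n) x ∂μ₁ +
        ∫⁻ y, convexCombo h₂ (w n) y ∂μ₂) atTop := ENNReal.liminf_add_liminf_le _ _
    _ ≤ 1 := liminf_le_of_frequently_le (Frequently.of_forall hn)

theorem liminfClosed_transportSet (H₁ : Set (Ω₁ → ℝ≥0∞)) (H₂ : Set (Ω₂ → ℝ≥0∞))
    (ν₁ : Measure Ω₁) [IsFiniteMeasure ν₁] (hac : ∀ μ ∈ polar H₁, μ ≪ ν₁) :
    LiminfClosed (transportSet H₁ H₂) := by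
  intro f hf
  choose h₁ h₂ hm₁ hm₂ hle hprice using fun n => (hf n).2
  obtain ⟨w, hw, hconv⟩ := exists_tailWeights_ae_tendsto_convexCombo ν₁ hm₁
  refine ⟨.liminf fun n => (hf n).1, fun x => limsup (fun n => convexCombo h₁ (w n) x) atTop,
    fun y => liminf (fun n => convexCombo h₂ (w n) y) atTop,
    .limsup fun n => measurable_convexCombo hm₁ (w n),
    .liminf fun n => measurable_convexCombo hm₂ (w n),
    liminf_le_limsup_convexCombo_add_liminf_convexCombo hle hw,
    priceH_add_priceH_le fun μ₁ hμ₁ μ₂ hμ₂ => ?_⟩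
  exact lintegral_limsup_convexCombo_add_lintegral_liminf_convexCombo_le hm₁ hm₂ hprice hw hμ₁ hμ₂
    ((hac μ₁ hμ₁).ae_le hconv)

end LiminfClosed

theorem transportSet_liminfClosed_general
    {Ω₁ Ω₂ : Type*}
    [MetricSpace Ω₁] [MeasurableSpace Ω₁]
    [MetricSpace Ω₂] [MeasurableSpace Ω₂]
    (H₁ : Set (Ω₁ → ℝ≥0∞)) (H₂ : Set (Ω₂ → ℝ≥0∞))
    (hdom₁ : ∃ ν₁ : Measure Ω₁, IsFiniteMeasure ν₁ ∧ ∀ μ ∈ polar H₁, μ ≪ ν₁) :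
    LiminfClosed (transportSet H₁ H₂) ∧
      ∀ h : ℕ → Ω₁ × Ω₂ → ℝ≥0∞, (∀ n, h n ∈ transportSet H₁ H₂) → Monotone h →
        (fun ω => ⨆ n, h n ω) ∈ transportSet H₁ H₂ := by
  obtain ⟨ν₁, hν₁, hac⟩ := hdom₁
  have hclosed := liminfClosed_transportSet H₁ H₂ ν₁ hac
  refine ⟨hclosed, fun h hh hmono => ?_⟩
  have hsup (ω : Ω₁ × Ω₂) : liminf (fun n => h n ω) atTop = ⨆ n, h n ω :=
    (tendsto_atTop_iSup fun _ _ hnm => hmono hnm ω).liminf_eq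
  simpa only [hsup] using hclosed h hh

/-- (From the proof of Theorem 4.1 in Bartl–Kupper, "A pointwise bipolar theorem".)
If for `i = 1,2` there is `μᵢ* ∈ ca₊(Ωᵢ)` with `μᵢ ≪ μᵢ*` for all `μᵢ ∈ Hᵢ°`, then the
set `H` is closed under `liminf`; equivalently, for every pointwise increasing sequence
`(hⁿ)` in `H`, the pointwise supremum `sup_n hⁿ` belongs to `H`. -/
theorem transportSet_liminfClosed
    {Ω₁ Ω₂ : Type*}
    [MetricSpace Ω₁] [SigmaCompactSpace Ω₁] [MeasurableSpace Ω₁] [BorelSpace Ω₁]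
    [MetricSpace Ω₂] [SigmaCompactSpace Ω₂] [MeasurableSpace Ω₂] [BorelSpace Ω₂]
    (H₁ : Set (Ω₁ → ℝ≥0∞)) (H₂ : Set (Ω₂ → ℝ≥0∞))
    (hmeas₁ : ∀ f ∈ H₁, Measurable f) (hmeas₂ : ∀ f ∈ H₂, Measurable f)
    (hne₁ : H₁.Nonempty) (hne₂ : H₂.Nonempty)
    (hmono₁ : MonotoneSet H₁) (hmono₂ : MonotoneSet H₂)
    (hconv₁ : ConvexSet H₁) (hconv₂ : ConvexSet H₂)
    (hreg₁ : RegularSet H₁) (hreg₂ : RegularSet H₂)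
    (hliminf₁ : LiminfClosed H₁) (hliminf₂ : LiminfClosed H₂)
    (hdom₁ : ∃ ν₁ : Measure Ω₁, IsFiniteMeasure ν₁ ∧ ∀ μ ∈ polar H₁, μ ≪ ν₁)
    (hdom₂ : ∃ ν₂ : Measure Ω₂, IsFiniteMeasure ν₂ ∧ ∀ μ ∈ polar H₂, μ ≪ ν₂) :
    LiminfClosed (transportSet H₁ H₂) ∧
      ∀ h : ℕ → Ω₁ × Ω₂ → ℝ≥0∞, (∀ n, h n ∈ transportSet H₁ H₂) → Monotone h →
        (fun ω => ⨆ n, h n ω) ∈ transportSet H₁ H₂ :=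
  transportSet_liminfClosed_general H₁ H₂ hdom₁
end
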